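/- arXiv:2603.19772 — 6 statements merged into one kernel-verified Lean document; each statement's English description precedes it below -/
import Mathlib

section
/- For every r ≥ 2 and ε > 0 there exists δ > 0 such that: for any finite partition α with at most r atoms and any finite partition β, if H_μ(α|β) < δ then there exists a partition β′ with at most r+1 atoms which is coarser than β (each atom of β′ is a union of atoms of β) and satisfies ρ̃(α,β′) < ε. -/
open MeasureTheory Filter Real Topology
open scoped symmDiff ENNReal

variable {X : Type*} [MeasurableSpace X]

/-- A finite measurable partition of `X` (mod `μ`-null sets), with atoms indexed by `ι`. -/
def IsPartition (μ : Measure X) {ι : Type*} (A : ι → Set X) : Prop :=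
  (∀ i, MeasurableSet (A i)) ∧ Pairwise (Function.onFun Disjoint A) ∧ μ (⋃ i, A i)ᶜ = 0

/-- `μ(A|B)`, with the convention that it is `0` when `μ B = 0`. -/
noncomputable def condProb (μ : Measure X) (A B : Set X) : ℝ :=
  if μ B = 0 then 0 else (μ (A ∩ B)).toReal / (μ B).toReal

/-- Conditional entropy `H_μ(α|β)` of two finite partitions. -/
noncomputable def condEntropy' (μ : Measure X) {ι κ : Type*} [Fintype ι] [Fintype κ]
    (A : ι → Set X) (B : κ → Set X) : ℝ :=
  ∑ j, (μ (B j)).toReal * ∑ i, Real.negMulLog (condProb μ (A i) (B j))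

/-- The Rokhlin distance `ρ(α,β) = H_μ(α|β) + H_μ(β|α)`. -/
noncomputable def rokhlinDist (μ : Measure X) {ι κ : Type*} [Fintype ι] [Fintype κ]
    (A : ι → Set X) (B : κ → Set X) : ℝ :=
  condEntropy' μ A B + condEntropy' μ B A

/-- Shannon entropy `H_μ(α)` of a finite partition. -/
noncomputable def partEntropy (μ : Measure X) {ι : Type*} [Fintype ι] (A : ι → Set X) : ℝ :=
  ∑ i, Real.negMulLog (μ (A i)).toReal

/-- Entropy of the join `⋁_{i=1}^n α_i` of `n` finite partitions. -/
noncomputable def jointEntropy (μ : Measure X) {n : ℕ} {ι : Type*} [Fintype ι]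
    (A : Fin n → ι → Set X) : ℝ :=
  ∑ f : Fin n → ι, Real.negMulLog (μ (⋂ i, A i (f i))).toReal

/-- `ρ̃(α,β)`: the minimal total symmetric difference over matchings of atoms. -/
noncomputable def rhoTilde (μ : Measure X) {r : ℕ} (A B : Fin r → Set X) : ℝ :=
  ⨅ σ : Equiv.Perm (Fin r), ∑ i, (μ (A i ∆ B (σ i))).toReal

/-- Total boundedness (precompactness) of a set w.r.t. a distance-like function. -/
def TotBddIn {α : Type*} (d : α → α → ℝ) (K : Set α) : Prop :=
  ∀ ε > 0, ∃ F : Finset α, ↑F ⊆ K ∧ ∀ a ∈ K, ∃ b ∈ F, d a b < ε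

open Classical in
/-- Normalized Hamming distance w.r.t. a finite family `E` of partitions. -/
noncomputable def hamDist {r : ℕ} (E : Finset (Fin r → Set X)) (x y : X) : ℝ :=
  ((E.filter fun α => ∀ i, ¬(x ∈ α i ∧ y ∈ α i)).card : ℝ) / E.card

/-- Ball for the normalized Hamming distance. -/
def hamBall {r : ℕ} (E : Finset (Fin r → Set X)) (x : X) (ε : ℝ) : Set X :=
  {y | hamDist E x y < ε}

/-!
Send every atom `B j` of `β` to an atom `α (f j)` that it meets in maximal measure and let the
`i`-th atom of `β′` be the union of the atoms sent to `i`. On `B j` the partitions `α` and `β′`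
then disagree on a set of measure `2 (μ B j - μ (α (f j) ∩ B j))`, while the Fano-type bound
`1 - max q ≤ H(q)` for the conditional distribution `q = μ(α · | B j)` shows that
`μ B j - μ (α (f j) ∩ B j)` is at most the contribution of `B j` to `H_μ(α|β)`. Hence
`ρ̃(α, β′) ≤ 2 H_μ(α|β)`, and `δ = ε / 2` works; the empty atom adjoined to `α` makes room for
the `r + 1` atoms of `β′`.
-/

lemma mul_neg_log_le_negMulLog {p q : ℝ} (hq : 0 ≤ q) (hqp : q ≤ p) :
    q * -log p ≤ negMulLog q := by
  rcases hq.eq_or_lt with rfl | hq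
  · simp
  · rw [negMulLog, neg_mul, mul_neg, neg_le_neg_iff]
    exact mul_le_mul_of_nonneg_left (log_le_log hq hqp) hq.le

lemma one_sub_le_sum_negMulLog {ι : Type*} [Fintype ι] {q : ι → ℝ} (hq : ∀ i, 0 ≤ q i)
    (hq_sum : ∑ i, q i = 1) {i₀ : ι} (hmax : ∀ i, q i ≤ q i₀) :
    1 - q i₀ ≤ ∑ i, negMulLog (q i) := by
  have hpos : 0 < q i₀ := by
    by_contra! h
    have : ∑ i, q i ≤ 0 := Finset.sum_nonpos fun i _ ↦ (hmax i).trans h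
    linarith
  calc 1 - q i₀ ≤ -log (q i₀) := by linarith [log_le_sub_one_of_pos hpos]
    _ = ∑ i, q i * -log (q i₀) := by rw [← Finset.sum_mul, hq_sum, one_mul]
    _ ≤ ∑ i, negMulLog (q i) :=
      Finset.sum_le_sum fun i _ ↦ mul_neg_log_le_negMulLog (hq i) (hmax i)

def coarsenAlong {Ω ι κ : Type*} (B : κ → Set Ω) (f : κ → ι) (i : ι) : Set Ω :=
  ⋃ (j) (_ : f j = i), B j

section coarsenAlong

variable {Ω ι κ : Type*} {B : κ → Set Ω} {f : κ → ι}

lemma subset_coarsenAlong (j : κ) : B j ⊆ coarsenAlong B f (f j) :=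
  Set.subset_biUnion_of_mem (u := fun j ↦ B j) rfl

lemma disjoint_coarsenAlong (hB : Pairwise (Function.onFun Disjoint B)) {j : κ} {i : ι}
    (hji : f j ≠ i) : Disjoint (B j) (coarsenAlong B f i) := by
  simp only [coarsenAlong, Set.disjoint_iUnion_right]
  rintro j' rfl
  exact hB fun h ↦ hji (h ▸ rfl)

lemma exists_finset_coarsenAlong_eq [Fintype κ] (i : ι) :
    ∃ s : Finset κ, coarsenAlong B f i = ⋃ j ∈ s, B j := by
  classical
  exact ⟨Finset.univ.filter (f · = i), by simp [coarsenAlong]⟩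

lemma symmDiff_coarsenAlong_inter_subset [DecidableEq ι] (hB : Pairwise (Function.onFun Disjoint B))
    (A : Set Ω) (i : ι) (j : κ) :
    (A ∆ coarsenAlong B f i) ∩ B j ⊆ if f j = i then B j \ A else A ∩ B j := by
  rintro x ⟨hx | hx, hxB⟩
  all_goals split_ifs with hji
  · exact absurd (hji ▸ subset_coarsenAlong j hxB) hx.2
  · exact ⟨hx.1, hxB⟩
  · exact ⟨hxB, hx.2⟩
  · exact absurd hx.1 ((disjoint_coarsenAlong hB hji).notMem_of_mem_left hxB)

end coarsenAlong

variable {μ : Measure X} {ι κ : Type*}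

namespace IsPartition

section Fintype

variable [Fintype ι] {A : ι → Set X}

lemma sum_measureReal_inter [IsFiniteMeasure μ] (hA : IsPartition μ A) {B : Set X}
    (hB : MeasurableSet B) : ∑ i, μ.real (A i ∩ B) = μ.real B := by
  obtain ⟨hA_meas, hA_disj, hA_cover⟩ := hA
  rw [← measureReal_iUnion_fintype (fun i j hij ↦ (hA_disj hij).mono Set.inter_subset_left
    Set.inter_subset_left) fun i ↦ (hA_meas i).inter hB, ← Set.iUnion_inter]
  exact measureReal_congr ((ae_eq_univ.2 hA_cover).inter (ae_eq_refl B)) |>.trans (by simp)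

lemma measureReal_le_sum_inter (hA : IsPartition μ A) (S : Set X) :
    μ.real S ≤ ∑ i, μ.real (S ∩ A i) := by
  calc μ.real S = μ.real (S ∩ ⋃ i, A i) :=
        (measureReal_congr ((ae_eq_refl S).inter (ae_eq_univ.2 hA.2.2))).trans (by simp) |>.symm
    _ ≤ ∑ i, μ.real (S ∩ A i) := by
      rw [Set.inter_iUnion]
      exact measureReal_iUnion_fintype_le _

lemma measureReal_sub_le_mul_sum_negMulLog [IsFiniteMeasure μ] (hA : IsPartition μ A)
    {B : Set X} (hB : MeasurableSet B) {i₀ : ι}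
    (hmax : ∀ i, μ.real (A i ∩ B) ≤ μ.real (A i₀ ∩ B)) :
    μ.real B - μ.real (A i₀ ∩ B) ≤ μ.real B * ∑ i, negMulLog (condProb μ (A i) B) := by
  by_cases hB0 : μ B = 0
  · simp [Measure.real, hB0, measure_mono_null Set.inter_subset_right hB0]
  have hB_pos : 0 < μ.real B := ENNReal.toReal_pos hB0 (measure_ne_top μ B)
  have hq : ∀ i, condProb μ (A i) B = μ.real (A i ∩ B) / μ.real B := fun i ↦ if_neg hB0
  have hfano := one_sub_le_sum_negMulLog (q := fun i ↦ condProb μ (A i) B) (i₀ := i₀)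
    (fun i ↦ by rw [hq]; positivity)
    (by simp only [hq, ← Finset.sum_div, hA.sum_measureReal_inter hB, div_self hB_pos.ne'])
    (fun i ↦ by simp only [hq]; exact div_le_div_of_nonneg_right (hmax i) hB_pos.le)
  calc μ.real B - μ.real (A i₀ ∩ B) = μ.real B * (1 - condProb μ (A i₀) B) := by
        rw [hq, mul_one_sub, mul_div_cancel₀ _ hB_pos.ne']
    _ ≤ _ := mul_le_mul_of_nonneg_left hfano hB_pos.le

end Fintype

lemma coarsenAlong [Countable κ] {B : κ → Set X} (hB : IsPartition μ B) (f : κ → ι) :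
    IsPartition μ (coarsenAlong B f) := by
  obtain ⟨hB_meas, hB_disj, hB_cover⟩ := hB
  refine ⟨fun i ↦ MeasurableSet.iUnion fun j ↦ .iUnion fun _ ↦ hB_meas j, ?_, ?_⟩
  · intro i i' hii'
    simp only [Function.onFun, _root_.coarsenAlong, Set.disjoint_iUnion_left]
    rintro j rfl
    exact disjoint_coarsenAlong hB_disj hii'
  · refine measure_mono_null (Set.compl_subset_compl.2 ?_) hB_cover
    exact Set.iUnion_subset fun j ↦ (subset_coarsenAlong j).trans (Set.subset_iUnion _ _)

lemma snoc_empty {n : ℕ} {A : Fin n → Set X} (hA : IsPartition μ A) :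
    IsPartition μ (Fin.snoc A (∅ : Set X) : Fin (n + 1) → Set X) := by
  obtain ⟨hA_meas, hA_disj, hA_cover⟩ := hA
  refine ⟨Fin.lastCases (by simp) fun i ↦ by simpa using hA_meas i, ?_, ?_⟩
  · intro i j hij
    induction i using Fin.lastCases <;> induction j using Fin.lastCases <;>
      simp only [Function.onFun, Fin.snoc_castSucc, Fin.snoc_last, Set.empty_disjoint,
        Set.disjoint_empty]
    exact hA_disj fun h ↦ hij (h ▸ rfl)
  · refine measure_mono_null (Set.compl_subset_compl.2 (Set.iUnion_subset fun i ↦ ?_)) hA_cover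
    simpa using Set.subset_iUnion (Fin.snoc A (∅ : Set X) : Fin (n + 1) → Set X) i.castSucc

end IsPartition

lemma condEntropy'_snoc_empty {n : ℕ} [Fintype κ] (A : Fin n → Set X) (B : κ → Set X) :
    condEntropy' μ (Fin.snoc A (∅ : Set X) : Fin (n + 1) → Set X) B = condEntropy' μ A B := by
  simp [condEntropy', Fin.sum_univ_castSucc, condProb]

lemma rhoTilde_le_sum_measureReal_symmDiff {n : ℕ} (A B : Fin n → Set X) :
    rhoTilde μ A B ≤ ∑ i, μ.real (A i ∆ B i) :=
  ciInf_le ⟨0, by rintro _ ⟨σ, rfl⟩; positivity⟩ (Equiv.refl _)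

lemma sum_measureReal_symmDiff_coarsenAlong_le [Fintype ι] [Fintype κ] [IsFiniteMeasure μ]
    {A : ι → Set X} {B : κ → Set X} (hA : IsPartition μ A) (hB : IsPartition μ B) (f : κ → ι) :
    ∑ i, μ.real (A i ∆ coarsenAlong B f i)
      ≤ 2 * ∑ j, (μ.real (B j) - μ.real (A (f j) ∩ B j)) := by
  classical
  have h_atom (j : κ) : ∑ i, (if f j = i then μ.real (B j \ A i) else μ.real (A i ∩ B j))
      = 2 * (μ.real (B j) - μ.real (A (f j) ∩ B j)) := by
    rw [← Finset.add_sum_erase _ _ (Finset.mem_univ (f j)), if_pos rfl,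
      Finset.sum_congr rfl fun i hi ↦ if_neg (Finset.ne_of_mem_erase hi).symm,
      Finset.sum_erase_eq_sub (Finset.mem_univ _), hA.sum_measureReal_inter (hB.1 j)]
    have h_split := measureReal_sdiff_add_inter (μ := μ) (s := B j) (hA.1 (f j))
    rw [Set.inter_comm] at h_split
    linarith
  calc ∑ i, μ.real (A i ∆ coarsenAlong B f i)
      ≤ ∑ i, ∑ j, (if f j = i then μ.real (B j \ A i) else μ.real (A i ∩ B j)) := by
        refine Finset.sum_le_sum fun i _ ↦ (hB.measureReal_le_sum_inter _).trans ?_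
        refine Finset.sum_le_sum fun j _ ↦ ?_
        rw [← apply_ite μ.real]
        exact measureReal_mono (symmDiff_coarsenAlong_inter_subset hB.2.1 (A i) i j)
    _ = 2 * ∑ j, (μ.real (B j) - μ.real (A (f j) ∩ B j)) := by
        rw [Finset.sum_comm, Finset.mul_sum]
        exact Finset.sum_congr rfl fun j _ ↦ h_atom j

lemma exists_coarsening_sum_measureReal_symmDiff_le [Fintype ι] [Nonempty ι] [Fintype κ]
    [IsFiniteMeasure μ] {A : ι → Set X} {B : κ → Set X} (hA : IsPartition μ A)
    (hB : IsPartition μ B) :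
    ∃ B' : ι → Set X, IsPartition μ B' ∧ (∀ i, ∃ s : Finset κ, B' i = ⋃ j ∈ s, B j) ∧
      ∑ i, μ.real (A i ∆ B' i) ≤ 2 * condEntropy' μ A B := by
  choose f hf using fun j ↦ Finite.exists_max fun i ↦ μ.real (A i ∩ B j)
  refine ⟨coarsenAlong B f, hB.coarsenAlong f, exists_finset_coarsenAlong_eq, ?_⟩
  calc ∑ i, μ.real (A i ∆ coarsenAlong B f i)
      ≤ 2 * ∑ j, (μ.real (B j) - μ.real (A (f j) ∩ B j)) :=
        sum_measureReal_symmDiff_coarsenAlong_le hA hB f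
    _ ≤ 2 * condEntropy' μ A B := by
        gcongr
        exact Finset.sum_le_sum fun j _ ↦ hA.measureReal_sub_le_mul_sum_negMulLog (hB.1 j) (hf j)

theorem exists_coarsening_close_of_small_condEntropy_general (μ : Measure X) [IsProbabilityMeasure μ]
    (r : ℕ) (ε : ℝ) (hε : 0 < ε) :
    ∃ δ > (0 : ℝ), ∀ (m : ℕ) (α : Fin r → Set X) (β : Fin m → Set X),
      IsPartition μ α → IsPartition μ β → condEntropy' μ α β < δ →
      ∃ β' : Fin (r + 1) → Set X, IsPartition μ β' ∧
        (∀ j, ∃ s : Finset (Fin m), β' j = ⋃ i ∈ s, β i) ∧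
        rhoTilde μ (Fin.snoc α (∅ : Set X)) β' < ε := by
  refine ⟨ε / 2, by positivity, fun m α β hα hβ hH ↦ ?_⟩
  obtain ⟨β', hβ', hcoarse, hsum⟩ :=
    exists_coarsening_sum_measureReal_symmDiff_le hα.snoc_empty hβ
  rw [condEntropy'_snoc_empty] at hsum
  refine ⟨β', hβ', hcoarse, ?_⟩
  calc rhoTilde μ (Fin.snoc α (∅ : Set X)) β'
      ≤ ∑ i, μ.real ((Fin.snoc α (∅ : Set X) : Fin (r + 1) → Set X) i ∆ β' i) :=
        rhoTilde_le_sum_measureReal_symmDiff _ _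
    _ < ε := by linarith

/-- For every `r ≥ 2` and `ε > 0` there is `δ > 0` such that for any
partition `α` with at most `r` atoms and any finite partition `β`, if `H_μ(α|β) < δ` then
some partition `β′` with at most `r+1` atoms, coarser than `β` (each atom of `β′` is a
union of atoms of `β`), satisfies `ρ̃(α,β′) < ε` (with `α` enumerated with `r+1` atoms by
adding an empty atom). -/
theorem exists_coarsening_close_of_small_condEntropy (μ : Measure X) [IsProbabilityMeasure μ]
    (r : ℕ) (hr : 2 ≤ r) (ε : ℝ) (hε : 0 < ε) :
    ∃ δ > (0 : ℝ), ∀ (m : ℕ) (α : Fin r → Set X) (β : Fin m → Set X),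
      IsPartition μ α → IsPartition μ β → condEntropy' μ α β < δ →
      ∃ β' : Fin (r + 1) → Set X, IsPartition μ β' ∧
        (∀ j, ∃ s : Finset (Fin m), β' j = ⋃ i ∈ s, β i) ∧
        rhoTilde μ (Fin.snoc α (∅ : Set X)) β' < ε :=
  exists_coarsening_close_of_small_condEntropy_general μ r ε hε
end

section
/- If a subset K of 𝔓_r is precompact in the Rokhlin metric ρ, then the maximal pattern entropy h*_μ(K) is zero. -/
open MeasureTheory Filter Real Topology
open scoped symmDiff ENNReal

variable {X : Type*} [MeasurableSpace X]

/-- `P*_{K,μ}(n) = sup_{α_1,…,α_n ∈ K} H_μ(⋁_{i=1}^n α_i)` for partitions with at most `r` atoms. -/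
noncomputable def patternSup (μ : Measure X) {r : ℕ} (K : Set (Fin r → Set X)) (n : ℕ) : ℝ :=
  sSup {H : ℝ | ∃ A : Fin n → Fin r → Set X, (∀ i, A i ∈ K) ∧ H = jointEntropy μ A}

/-- Maximal pattern entropy `h*_μ(K) = lim_n P*_{K,μ}(n)/n`. -/
noncomputable def maxPatternEntropy (μ : Measure X) {r : ℕ} (K : Set (Fin r → Set X)) : ℝ :=
  limsup (fun n => patternSup μ K n / n) atTop

/-!
Cover `K` up to Rokhlin distance `ε` by a finite `F ⊆ K` and let `Q = ⋁_{β ∈ F} β`. If each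
`αᵢ ∈ K` is `ε`-close to some `βᵢ ∈ F`, then since `Q` refines every `βᵢ`,
`H(⋁ᵢ αᵢ) ≤ H(Q) + H(⋁ᵢ αᵢ | Q) ≤ ∑_{β ∈ F} H(β) + ∑ᵢ H(αᵢ | Q) ≤ ∑_{β ∈ F} H(β) + ∑ᵢ H(αᵢ | βᵢ)`,
which is at most `C + n ε` with `C` independent of `n`. Hence `P*(n) / n → 0`.
-/

open ProbabilityTheory

namespace Real

theorem sum_negMulLog_le_sum_neg_mul_log {ι : Type*} (s : Finset ι) {p t : ι → ℝ}
    (hp : ∀ i ∈ s, 0 ≤ p i) (ht : ∀ i ∈ s, 0 ≤ t i) (hpt : ∀ i ∈ s, t i = 0 → p i = 0)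
    (hsum : ∑ i ∈ s, t i ≤ ∑ i ∈ s, p i) :
    ∑ i ∈ s, negMulLog (p i) ≤ ∑ i ∈ s, -(p i * log (t i)) := by
  have key : ∀ i ∈ s, negMulLog (p i) ≤ -(p i * log (t i)) + (t i - p i) := by
    intro i hi
    rcases (hp i hi).eq_or_lt with hp0 | hp0
    · simpa [← hp0] using ht i hi
    have ht0 : 0 < t i := (ht i hi).lt_of_ne fun h => hp0.ne' (hpt i hi h.symm)
    have := mul_le_mul_of_nonneg_left (log_le_sub_one_of_pos (div_pos ht0 hp0)) hp0.le
    rw [log_div ht0.ne' hp0.ne', mul_sub_one, mul_div_cancel₀ _ hp0.ne'] at this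
    rw [negMulLog]
    linarith
  calc ∑ i ∈ s, negMulLog (p i)
      ≤ ∑ i ∈ s, (-(p i * log (t i)) + (t i - p i)) := Finset.sum_le_sum key
    _ ≤ ∑ i ∈ s, -(p i * log (t i)) := by
      rw [Finset.sum_add_distrib, Finset.sum_sub_distrib]
      linarith

theorem negMulLog_sum_le {ι : Type*} (s : Finset ι) {m : ι → ℝ} (hm : ∀ i ∈ s, 0 ≤ m i) :
    negMulLog (∑ i ∈ s, m i) ≤ ∑ i ∈ s, negMulLog (m i) := by
  rw [negMulLog, neg_mul, Finset.sum_mul, ← Finset.sum_neg_distrib]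
  refine Finset.sum_le_sum fun i hi => ?_
  rcases (hm i hi).eq_or_lt with h | h
  · simp [← h]
  · rw [negMulLog, neg_mul, neg_le_neg_iff]
    exact mul_le_mul_of_nonneg_left (log_le_log h (Finset.single_le_sum hm hi)) h.le

theorem sum_mul_negMulLog_div_le {ι : Type*} (s : Finset ι) {x w : ι → ℝ}
    (hx : ∀ i ∈ s, 0 ≤ x i) (hxw : ∀ i ∈ s, x i ≤ w i) :
    ∑ i ∈ s, w i * negMulLog (x i / w i) ≤
      (∑ i ∈ s, w i) * negMulLog ((∑ i ∈ s, x i) / ∑ i ∈ s, w i) := by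
  have hw : ∀ i ∈ s, 0 ≤ w i := fun i hi => (hx i hi).trans (hxw i hi)
  set W := ∑ i ∈ s, w i
  rcases (show 0 ≤ W from Finset.sum_nonneg hw).eq_or_lt with hW | hW
  · have hw0 : ∀ i ∈ s, w i = 0 := (Finset.sum_eq_zero_iff_of_nonneg hw).mp hW.symm
    rw [← hW, zero_mul]
    exact (Finset.sum_eq_zero fun i hi => by rw [hw0 i hi, zero_mul]).le
  have hmass : ∀ i ∈ s, w i / W * (x i / w i) = x i / W := by
    intro i hi
    rcases (hw i hi).eq_or_lt with hwi | hwi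
    · rw [← hwi, le_antisymm (hwi ▸ hxw i hi) (hx i hi)]
      simp
    · field_simp
  have jensen := concaveOn_negMulLog.le_map_sum (t := s) (w := fun i => w i / W)
    (p := fun i => x i / w i) (fun i hi => div_nonneg (hw i hi) hW.le)
    (by rw [← Finset.sum_div, div_self hW.ne'])
    (fun i hi => Set.mem_Ici.mpr (div_nonneg (hx i hi) (hw i hi)))
  simp only [smul_eq_mul, Finset.sum_congr rfl hmass, ← Finset.sum_div] at jensen
  calc ∑ i ∈ s, w i * negMulLog (x i / w i)
      = W * ∑ i ∈ s, w i / W * negMulLog (x i / w i) := by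
        rw [Finset.mul_sum]
        exact Finset.sum_congr rfl fun i _ => by field_simp [hW.ne']
    _ ≤ W * negMulLog ((∑ i ∈ s, x i) / W) := mul_le_mul_of_nonneg_left jensen hW.le

end Real

theorem tendsto_div_natCast_nhds_zero_of_le_add_mul {u : ℕ → ℝ} (h0 : ∀ n, 0 ≤ u n)
    (h : ∀ ε > 0, ∃ C, ∀ n : ℕ, u n ≤ C + n * ε) :
    Tendsto (fun n => u n / n) atTop (𝓝 0) := by
  refine tendsto_order.2
    ⟨fun a ha => .of_forall fun n => ha.trans_le (by have := h0 n; positivity), fun a ha => ?_⟩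
  obtain ⟨C, hC⟩ := h (a / 2) (half_pos ha)
  filter_upwards [(tendsto_const_div_atTop_nhds_zero_nat C).eventually (gt_mem_nhds (half_pos ha)),
    eventually_gt_atTop 0] with n hCn hn
  have hn' : (0 : ℝ) < n := Nat.cast_pos.mpr hn
  calc u n / n ≤ (C + n * (a / 2)) / n := div_le_div_of_nonneg_right (hC n) hn'.le
    _ = C / n + a / 2 := by field_simp
    _ < a := by linarith

section

variable {μ : Measure X}

theorem condProb_eq_div (A B : Set X) :
    condProb μ A B = (μ (A ∩ B)).toReal / (μ B).toReal := by
  unfold condProb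
  split_ifs with h
  · rw [h, ENNReal.toReal_zero, div_zero]
  · rfl

theorem condProb_eq_toReal_cond (A : Set X) {B : Set X} (hB : MeasurableSet B) :
    condProb μ A B = (μ[A | B]).toReal := by
  unfold condProb
  split_ifs with h
  · rw [cond_eq_zero_of_meas_eq_zero h, Measure.coe_zero, Pi.zero_apply, ENNReal.toReal_zero]
  · rw [cond_apply hB, ENNReal.toReal_mul, ENNReal.toReal_inv, Set.inter_comm, div_eq_inv_mul]

theorem condProb_nonneg (A B : Set X) : 0 ≤ condProb μ A B := by
  rw [condProb_eq_div]
  positivity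

theorem condProb_le_one [IsFiniteMeasure μ] (A B : Set X) : condProb μ A B ≤ 1 := by
  rw [condProb_eq_div]
  exact div_le_one_of_le₀ (ENNReal.toReal_mono (measure_ne_top μ B)
    (measure_mono Set.inter_subset_right)) ENNReal.toReal_nonneg

theorem toReal_measure_inter_eq_mul_condProb [IsFiniteMeasure μ] (A B : Set X) :
    (μ (A ∩ B)).toReal = (μ B).toReal * condProb μ A B := by
  rw [condProb_eq_div]
  rcases eq_or_ne (μ B) 0 with h | h
  · rw [measure_mono_null Set.inter_subset_right h, h, ENNReal.toReal_zero, zero_mul]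
  · rw [mul_div_cancel₀ _ (ENNReal.toReal_ne_zero.mpr ⟨h, measure_ne_top μ B⟩)]

namespace IsPartition

variable {ι κ : Type*} {A : ι → Set X}

theorem cond (hA : IsPartition μ A) (s : Set X) : IsPartition μ[|s] A :=
  ⟨hA.1, hA.2.1, cond_absolutelyContinuous hA.2.2⟩

theorem sum_toReal_measure_inter [Fintype ι] [IsFiniteMeasure μ] (hA : IsPartition μ A)
    {S : Set X} (hS : MeasurableSet S) :
    ∑ i, (μ (S ∩ A i)).toReal = (μ S).toReal := by
  have hdisj : Pairwise (Function.onFun Disjoint fun i => S ∩ A i) := fun i j hij =>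
    (hA.2.1 hij).mono Set.inter_subset_right Set.inter_subset_right
  rw [← measure_inter_conull hA.2.2, Set.inter_iUnion,
    measure_iUnion hdisj fun i => hS.inter (hA.1 i), tsum_fintype,
    ENNReal.toReal_sum fun i _ => measure_ne_top μ _]

theorem sum_toReal_measure [Fintype ι] [IsProbabilityMeasure μ] (hA : IsPartition μ A) :
    ∑ i, (μ (A i)).toReal = 1 := by
  simpa using hA.sum_toReal_measure_inter MeasurableSet.univ

theorem sum_condProb_le_one [Fintype ι] [IsFiniteMeasure μ] (hA : IsPartition μ A)
    {B : Set X} (hB : MeasurableSet B) : ∑ i, condProb μ (A i) B ≤ 1 := by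
  simp_rw [condProb_eq_div, ← Finset.sum_div, Set.inter_comm (A _),
    hA.sum_toReal_measure_inter hB]
  exact div_self_le_one _

theorem iInter {P : κ → ι → Set X} [Countable κ] (hP : ∀ k, IsPartition μ (P k)) :
    IsPartition μ (fun g : κ → ι => ⋂ k, P k (g k)) := by
  refine ⟨fun g => .iInter fun k => (hP k).1 _, fun g g' hne => ?_, ?_⟩
  · obtain ⟨k, hk⟩ := Function.ne_iff.mp hne
    exact ((hP k).2.1 hk).mono (Set.iInter_subset _ k) (Set.iInter_subset _ k)
  · refine measure_mono_null (fun x hx => ?_) (measure_iUnion_null fun k => (hP k).2.2)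
    by_contra hcov
    simp only [Set.mem_iUnion, Set.mem_compl_iff] at hcov
    push Not at hcov
    choose g hg using hcov
    exact hx (Set.mem_iUnion.mpr ⟨g, Set.mem_iInter.mpr hg⟩)

theorem sum_fiber_toReal_measure_inter [Fintype ι] [DecidableEq κ] [IsFiniteMeasure μ]
    {Q : ι → Set X} (hQ : IsPartition μ Q) {B : κ → Set X}
    (hB : Pairwise (Function.onFun Disjoint B)) {φ : ι → κ} (hφ : ∀ g, Q g ⊆ B (φ g))
    {S : Set X} (hS : MeasurableSet S) (b : κ) (hb : MeasurableSet (B b)) :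
    ∑ g with φ g = b, (μ (S ∩ Q g)).toReal = (μ (S ∩ B b)).toReal := by
  rw [← hQ.sum_toReal_measure_inter (hS.inter hb), Finset.sum_filter]
  refine Finset.sum_congr rfl fun g _ => ?_
  split_ifs with h
  · subst h
    rw [Set.inter_assoc, Set.inter_eq_right.mpr (hφ g)]
  · rw [measure_mono_null (fun x hx => (hB (Ne.symm h)).le_bot ⟨hx.1.2, hφ g hx.2⟩)
      measure_empty, ENNReal.toReal_zero]

end IsPartition

section Entropy

variable {ι κ : Type*} [Fintype ι] [Fintype κ]

theorem partEntropy_nonneg [IsProbabilityMeasure μ] (A : ι → Set X) : 0 ≤ partEntropy μ A :=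
  Finset.sum_nonneg fun _ _ => Real.negMulLog_nonneg ENNReal.toReal_nonneg measureReal_le_one

theorem condEntropy'_nonneg [IsFiniteMeasure μ] (A : ι → Set X) (B : κ → Set X) :
    0 ≤ condEntropy' μ A B :=
  Finset.sum_nonneg fun _ _ => mul_nonneg ENNReal.toReal_nonneg <| Finset.sum_nonneg fun _ _ =>
    Real.negMulLog_nonneg (condProb_nonneg _ _) (condProb_le_one _ _)

theorem condEntropy'_eq_sum_partEntropy_cond (A : ι → Set X) {B : κ → Set X}
    (hB : ∀ j, MeasurableSet (B j)) :
    condEntropy' μ A B = ∑ j, (μ (B j)).toReal * partEntropy μ[|B j] A := by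
  simp only [condEntropy', partEntropy, condProb_eq_toReal_cond _ (hB _)]

theorem partEntropy_le_partEntropy_add_condEntropy' [IsProbabilityMeasure μ] {A : ι → Set X}
    {B : κ → Set X} (hA : IsPartition μ A) (hB : IsPartition μ B) :
    partEntropy μ A ≤ partEntropy μ B + condEntropy' μ A B := by
  have hsplit : ∀ i j, Real.negMulLog (μ (A i ∩ B j)).toReal =
      condProb μ (A i) (B j) * Real.negMulLog (μ (B j)).toReal +
        (μ (B j)).toReal * Real.negMulLog (condProb μ (A i) (B j)) := fun i j => by
    rw [toReal_measure_inter_eq_mul_condProb, Real.negMulLog_mul]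
  calc partEntropy μ A
      ≤ ∑ i, ∑ j, Real.negMulLog (μ (A i ∩ B j)).toReal := by
        refine Finset.sum_le_sum fun i _ => ?_
        rw [← hB.sum_toReal_measure_inter (hA.1 i)]
        exact Real.negMulLog_sum_le _ fun j _ => ENNReal.toReal_nonneg
    _ = ∑ j, (∑ i, condProb μ (A i) (B j)) * Real.negMulLog (μ (B j)).toReal +
          condEntropy' μ A B := by
        simp only [hsplit, Finset.sum_add_distrib, condEntropy', Finset.sum_mul, Finset.mul_sum]
        rw [Finset.sum_comm, Finset.sum_comm (γ := ι)]
    _ ≤ partEntropy μ B + condEntropy' μ A B := by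
        refine add_le_add_left (Finset.sum_le_sum fun j _ => ?_) _
        exact mul_le_of_le_one_left
          (Real.negMulLog_nonneg ENNReal.toReal_nonneg measureReal_le_one)
          (hA.sum_condProb_le_one (hB.1 j))

theorem partEntropy_iInter_le_sum [DecidableEq κ] [IsProbabilityMeasure μ]
    {P : κ → ι → Set X} (hP : ∀ k, IsPartition μ (P k)) :
    partEntropy μ (fun g : κ → ι => ⋂ k, P k (g k)) ≤ ∑ k, partEntropy μ (P k) := by
  have hJ := IsPartition.iInter hP
  set m := fun g : κ → ι => (μ (⋂ k, P k (g k))).toReal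
  have hm_le : ∀ g k, m g ≤ (μ (P k (g k))).toReal := fun g k =>
    ENNReal.toReal_mono (measure_ne_top _ _) (measure_mono (Set.iInter_subset _ k))
  have hlog_prod : ∀ g, -(m g * Real.log (∏ k, (μ (P k (g k))).toReal)) =
      ∑ k, -(m g * Real.log (μ (P k (g k))).toReal) := by
    intro g
    rcases (show 0 ≤ m g from ENNReal.toReal_nonneg).eq_or_lt with h | h
    · simp [← h]
    rw [Real.log_prod fun k _ => (h.trans_le (hm_le g k)).ne', Finset.mul_sum,
      Finset.sum_neg_distrib]
  have hfactor : ∀ k, ∑ g, -(m g * Real.log (μ (P k (g k))).toReal) = partEntropy μ (P k) := by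
    intro k
    classical
    rw [← Finset.sum_fiberwise Finset.univ (fun g : κ → ι => g k)]
    refine Finset.sum_congr rfl fun a _ => ?_
    have hfib := hJ.sum_fiber_toReal_measure_inter (hP k).2.1 (φ := fun g => g k)
      (fun g => Set.iInter_subset _ k) MeasurableSet.univ a ((hP k).1 a)
    simp only [Set.univ_inter] at hfib
    rw [Finset.sum_congr rfl fun g hg => by rw [(Finset.mem_filter.mp hg).2],
      Finset.sum_neg_distrib, ← Finset.sum_mul, hfib, Real.negMulLog, neg_mul]
  calc partEntropy μ (fun g : κ → ι => ⋂ k, P k (g k))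
      ≤ ∑ g, -(m g * Real.log (∏ k, (μ (P k (g k))).toReal)) := by
        refine Real.sum_negMulLog_le_sum_neg_mul_log _ (fun g _ => ENNReal.toReal_nonneg)
          (fun g _ => Finset.prod_nonneg fun k _ => ENNReal.toReal_nonneg) (fun g _ h => ?_) ?_
        · obtain ⟨k, -, hk⟩ := Finset.prod_eq_zero_iff.mp h
          exact le_antisymm (hk ▸ hm_le g k) ENNReal.toReal_nonneg
        · rw [← Fintype.prod_sum fun k a => (μ (P k a)).toReal, hJ.sum_toReal_measure]
          simp only [(hP _).sum_toReal_measure, Finset.prod_const_one, le_refl]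
    _ = ∑ k, partEntropy μ (P k) := by
        rw [Finset.sum_congr rfl fun g _ => hlog_prod g, Finset.sum_comm]
        exact Finset.sum_congr rfl fun k _ => hfactor k

theorem condEntropy'_iInter_le_sum [DecidableEq κ] [IsFiniteMeasure μ] {P : κ → ι → Set X}
    (hP : ∀ k, IsPartition μ (P k)) {ι' : Type*} [Fintype ι'] {Q : ι' → Set X}
    (hQ : ∀ j, MeasurableSet (Q j)) :
    condEntropy' μ (fun g : κ → ι => ⋂ k, P k (g k)) Q ≤ ∑ k, condEntropy' μ (P k) Q := by
  simp only [condEntropy'_eq_sum_partEntropy_cond _ hQ]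
  rw [Finset.sum_comm]
  refine Finset.sum_le_sum fun j _ => ?_
  rw [← Finset.mul_sum]
  rcases eq_or_ne (μ (Q j)) 0 with h | h
  · simp [h]
  have := cond_isProbabilityMeasure (μ := μ) h
  exact mul_le_mul_of_nonneg_left (partEntropy_iInter_le_sum fun k => (hP k).cond _)
    ENNReal.toReal_nonneg

theorem condEntropy'_le_of_subset [IsFiniteMeasure μ] {ι' : Type*} [Fintype ι']
    {A : ι → Set X} (hA : ∀ i, MeasurableSet (A i)) {Q : ι' → Set X} (hQ : IsPartition μ Q)
    {B : κ → Set X} (hB : IsPartition μ B) {φ : ι' → κ} (hφ : ∀ g, Q g ⊆ B (φ g)) :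
    condEntropy' μ A Q ≤ condEntropy' μ A B := by
  classical
  simp only [condEntropy', condProb_eq_div, Finset.mul_sum]
  rw [Finset.sum_comm, Finset.sum_comm (γ := κ)]
  refine Finset.sum_le_sum fun i _ => ?_
  rw [← Finset.sum_fiberwise Finset.univ φ]
  refine Finset.sum_le_sum fun b _ => ?_
  have hmass := hQ.sum_fiber_toReal_measure_inter hB.2.1 hφ MeasurableSet.univ b (hB.1 b)
  simp only [Set.univ_inter] at hmass
  have jensen := Real.sum_mul_negMulLog_div_le {g | φ g = b}
    (x := fun g => (μ (A i ∩ Q g)).toReal) (w := fun g => (μ (Q g)).toReal)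
    (fun _ _ => ENNReal.toReal_nonneg)
    (fun g _ => ENNReal.toReal_mono (measure_ne_top _ _) (measure_mono Set.inter_subset_right))
  rwa [hQ.sum_fiber_toReal_measure_inter hB.2.1 hφ (hA i) b (hB.1 b), hmass] at jensen

end Entropy

theorem jointEntropy_le_sum_partEntropy_add_sum_condEntropy' [IsProbabilityMeasure μ]
    {ι : Type*} [Fintype ι] {n : ℕ} {F : Finset (ι → Set X)} (hF : ∀ β ∈ F, IsPartition μ β)
    {A : Fin n → ι → Set X} (hA : ∀ i, IsPartition μ (A i)) {B : Fin n → ι → Set X}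
    (hBF : ∀ i, B i ∈ F) :
    jointEntropy μ A ≤ ∑ β ∈ F, partEntropy μ β + ∑ i, condEntropy' μ (A i) (B i) := by
  classical
  set Q := fun g : F → ι => ⋂ β : F, (β : ι → Set X) (g β)
  have hQ : IsPartition μ Q := IsPartition.iInter fun β => hF β β.2
  calc jointEntropy μ A
      ≤ partEntropy μ Q + condEntropy' μ (fun f : Fin n → ι => ⋂ i, A i (f i)) Q :=
        partEntropy_le_partEntropy_add_condEntropy' (IsPartition.iInter hA) hQ
    _ ≤ ∑ β : F, partEntropy μ (β : ι → Set X) + ∑ i, condEntropy' μ (A i) Q :=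
        add_le_add (partEntropy_iInter_le_sum fun β => hF β β.2)
          (condEntropy'_iInter_le_sum hA hQ.1)
    _ ≤ ∑ β ∈ F, partEntropy μ β + ∑ i, condEntropy' μ (A i) (B i) := by
        rw [Finset.sum_coe_sort F (partEntropy μ)]
        gcongr with i
        exact condEntropy'_le_of_subset (hA i).1 hQ (hF _ (hBF i)) (φ := fun g => g ⟨B i, hBF i⟩)
          fun g => Set.iInter_subset _ (⟨B i, hBF i⟩ : F)

theorem patternSup_nonneg [IsProbabilityMeasure μ] {r : ℕ} (K : Set (Fin r → Set X)) (n : ℕ) :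
    0 ≤ patternSup μ K n :=
  Real.sSup_nonneg <| by
    rintro _ ⟨A, -, rfl⟩
    exact partEntropy_nonneg _

theorem exists_patternSup_le_add_mul_of_totBddIn [IsProbabilityMeasure μ] {r : ℕ}
    {K : Set (Fin r → Set X)} (hK : ∀ α ∈ K, IsPartition μ α)
    (hpre : TotBddIn (rokhlinDist μ) K) {ε : ℝ} (hε : 0 < ε) :
    ∃ C, ∀ n : ℕ, patternSup μ K n ≤ C + n * ε := by
  obtain ⟨F, hFK, hF⟩ := hpre ε hε
  refine ⟨∑ β ∈ F, partEntropy μ β, fun n => Real.sSup_le ?_ ?_⟩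
  · rintro _ ⟨A, hAK, rfl⟩
    choose B hBF hAB using fun i => hF (A i) (hAK i)
    have hcond : ∀ i, condEntropy' μ (A i) (B i) ≤ ε := fun i =>
      (le_add_of_nonneg_right (condEntropy'_nonneg _ _)).trans (hAB i).le
    calc jointEntropy μ A
        ≤ ∑ β ∈ F, partEntropy μ β + ∑ i, condEntropy' μ (A i) (B i) :=
          jointEntropy_le_sum_partEntropy_add_sum_condEntropy' (fun β hβ => hK β (hFK hβ))
            (fun i => hK _ (hAK i)) hBF
      _ ≤ ∑ β ∈ F, partEntropy μ β + n * ε := by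
          gcongr
          simpa using Finset.sum_le_sum fun i (_ : i ∈ Finset.univ) => hcond i
  · exact add_nonneg (Finset.sum_nonneg fun β _ => partEntropy_nonneg β) (by positivity)

end

theorem maxPatternEntropy_eq_zero_of_precompact_general (μ : Measure X) [IsProbabilityMeasure μ]
    {r : ℕ} (K : Set (Fin r → Set X)) (hK : ∀ α ∈ K, IsPartition μ α)
    (hpre : TotBddIn (rokhlinDist μ) K) :
    maxPatternEntropy μ K = 0 :=
  (tendsto_div_natCast_nhds_zero_of_le_add_mul (patternSup_nonneg K)
    fun _ hε => exists_patternSup_le_add_mul_of_totBddIn hK hpre hε).limsup_eq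

/-- If `K ⊆ 𝔓_r` is precompact in the Rokhlin metric `ρ`,
then the maximal pattern entropy `h*_μ(K)` is zero. -/
theorem maxPatternEntropy_eq_zero_of_precompact (μ : Measure X) [IsProbabilityMeasure μ]
    {r : ℕ} (hr : 2 ≤ r) (K : Set (Fin r → Set X)) (hK : ∀ α ∈ K, IsPartition μ α)
    (hpre : TotBddIn (rokhlinDist μ) K) :
    maxPatternEntropy μ K = 0 :=
  maxPatternEntropy_eq_zero_of_precompact_general μ K hK hpre
end

section
/- If a subset K of 𝔓_r has zero maximal pattern entropy, then K is precompact in the Rokhlin metric. Equivalently: if K is not precompact in ρ̃, then there exist δ > 0 and a sequence (α_{n_i}) in K with H_μ(α_{n_i} | ⋁_{j<i} α_{n_j}) ≥ δ for all i ≥ 2, whence the sequence entropy of (α_{n_i}) is at least δ > 0. -/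
/-!
If `K` is not precompact, fix `ε > 0` such that no finite subset of `K` is an `ε`-net. Relative to
a finite partition `γ`, code each `α ∈ K` by the map sending every atom of `γ` to the atom of `α`
that carries most of it. Fano-type estimates show that two partitions with the same code and with
`H(α|γ)`, `H(α'|γ)` small are `ρ`-closer than `ε`; as there are finitely many codes, some `α ∈ K`
has `H(α|γ) ≥ δ`, with `δ > 0` independent of `γ`. Taking for `γ` the join of the partitions
chosen so far, the chain rule yields `n` elements of `K` whose join has entropy at least `n δ`,
so `h*_μ(K) ≥ δ > 0`.
-/

open MeasureTheory Filter Real Topology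
open scoped symmDiff ENNReal

variable {X : Type*} [MeasurableSpace X]

lemma mul_one_sub_le_negMulLog {x : ℝ} (hx : 0 ≤ x) : x * (1 - x) ≤ negMulLog x := by
  rcases hx.eq_or_lt with rfl | hx
  · simp
  · have := log_le_sub_one_of_pos hx
    rw [negMulLog]
    nlinarith

lemma one_sub_le_sum_negMulLog_s6 {ι : Type*} [Fintype ι] {c : ι → ℝ} (hc : ∀ i, 0 ≤ c i)
    (hsum : ∑ i, c i = 1) {m : ι} (hm : ∀ i, c i ≤ c m) : 1 - c m ≤ ∑ i, negMulLog (c i) :=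
  calc 1 - c m = ∑ i, c i * (1 - c m) := by rw [← Finset.sum_mul, hsum, one_mul]
    _ ≤ ∑ i, c i * (1 - c i) :=
      Finset.sum_le_sum fun i _ => mul_le_mul_of_nonneg_left (by linarith [hm i]) (hc i)
    _ ≤ ∑ i, negMulLog (c i) := Finset.sum_le_sum fun i _ => mul_one_sub_le_negMulLog (hc i)

lemma sum_negMulLog_le {ι : Type*} (s : Finset ι) {c : ι → ℝ} (hc : ∀ i ∈ s, 0 ≤ c i) :
    ∑ i ∈ s, negMulLog (c i) ≤ (∑ i ∈ s, c i) * log s.card + negMulLog (∑ i ∈ s, c i) := by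
  rcases s.eq_empty_or_nonempty with rfl | hs
  · simp
  have hN : (0 : ℝ) < s.card := by exact_mod_cast hs.card_pos
  have hJensen := concaveOn_negMulLog.le_map_sum (t := s) (w := fun _ => (s.card : ℝ)⁻¹)
    (fun _ _ => by positivity) (by simp [hN.ne']) hc
  have hinv : negMulLog (s.card : ℝ)⁻¹ = (s.card : ℝ)⁻¹ * log s.card := by
    simp [negMulLog, log_inv]
  simp only [smul_eq_mul, ← Finset.mul_sum, negMulLog_mul, hinv] at hJensen
  calc ∑ i ∈ s, negMulLog (c i) = s.card * ((s.card : ℝ)⁻¹ * ∑ i ∈ s, negMulLog (c i)) := by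
        field_simp
    _ ≤ s.card * ((∑ i ∈ s, c i) * ((s.card : ℝ)⁻¹ * log s.card) +
          (s.card : ℝ)⁻¹ * negMulLog (∑ i ∈ s, c i)) := by gcongr
    _ = _ := by field_simp

noncomputable def fanoBound (N : ℕ) (t : ℝ) : ℝ := (1 + log N) * t + negMulLog t

lemma concaveOn_fanoBound (N : ℕ) : ConcaveOn ℝ (Set.Ici 0) (fanoBound N) :=
  ((concaveOn_id (convex_Ici 0)).smul (by positivity)).add concaveOn_negMulLog

lemma sum_negMulLog_le_fanoBound {ι : Type*} [Fintype ι] {c : ι → ℝ}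
    (hc : ∀ i, 0 ≤ c i) (hsum : ∑ i, c i = 1) (j : ι) :
    ∑ i, negMulLog (c i) ≤ fanoBound (Fintype.card ι) (1 - c j) := by
  classical
  have hrest : ∑ i ∈ Finset.univ.erase j, c i = 1 - c j := by
    rw [Finset.sum_erase_eq_sub (Finset.mem_univ j), hsum]
  have hrest_nonneg : 0 ≤ 1 - c j := hrest ▸ Finset.sum_nonneg fun i _ => hc i
  have hj := negMulLog_le_one_sub_self (hc j)
  have hJensen := sum_negMulLog_le (Finset.univ.erase j) (c := c) fun i _ => hc i
  have hcard : log (Finset.univ.erase j).card ≤ log (Fintype.card ι) := by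
    rcases Nat.eq_zero_or_pos (Finset.univ.erase j).card with h | h
    · simp [h, log_natCast_nonneg]
    · exact log_le_log (by exact_mod_cast h) (by exact_mod_cast Finset.card_le_univ _)
  rw [hrest] at hJensen
  rw [← Finset.add_sum_erase _ _ (Finset.mem_univ j), fanoBound]
  nlinarith [mul_le_mul_of_nonneg_left hcard hrest_nonneg]

lemma exists_pos_forall_fanoBound_lt (N : ℕ) {ε : ℝ} (hε : 0 < ε) :
    ∃ δ > 0, ∀ t, 0 ≤ t → t < δ → fanoBound N t < ε := by
  have hcont : ContinuousAt (fanoBound N) 0 := by unfold fanoBound; fun_prop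
  have hsmall := hcont.eventually_lt continuousAt_const (by simpa [fanoBound] using hε)
  obtain ⟨δ, hδ, h⟩ := Metric.eventually_nhds_iff.1 hsmall
  exact ⟨δ, hδ, fun t ht htδ => h (by rwa [Real.dist_0_eq_abs, abs_of_nonneg ht])⟩

section Partitions

variable {μ : Measure X} {ι κ : Type*} [Fintype ι] [Fintype κ]

lemma measureReal_mul_inter_div [IsFiniteMeasure μ] (A B : Set X) :
    μ.real B * (μ.real (A ∩ B) / μ.real B) = μ.real (A ∩ B) := by
  rcases eq_or_ne (μ.real B) 0 with h | h
  · have : μ.real (A ∩ B) = 0 :=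
      le_antisymm (h ▸ measureReal_mono Set.inter_subset_right) measureReal_nonneg
    simp [h, this]
  · field_simp

lemma condEntropy'_eq [IsFiniteMeasure μ] (A : ι → Set X) (B : κ → Set X) :
    condEntropy' μ A B =
      ∑ j, μ.real (B j) * ∑ i, negMulLog (μ.real (A i ∩ B j) / μ.real (B j)) := by
  have hcond : ∀ A B, condProb μ A B = μ.real (A ∩ B) / μ.real B := fun A B => by
    by_cases h : μ B = 0 <;> simp [condProb, h, measureReal_def]
  simp only [condEntropy', hcond, measureReal_def]

lemma IsPartition.sum_measureReal_inter_s6 [IsFiniteMeasure μ] {α : ι → Set X}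
    (hα : IsPartition μ α) {B : Set X} (hB : MeasurableSet B) :
    ∑ i, μ.real (α i ∩ B) = μ.real B := by
  have hcover : μ.real (B ∩ ⋃ i, α i) = μ.real B := by
    simp only [measureReal_def, measure_inter_conull hα.2.2]
  rw [← hcover, Set.inter_iUnion, measureReal_iUnion_fintype
    (fun i j hij => (hα.2.1 hij).mono Set.inter_subset_right Set.inter_subset_right)
    (fun i => hB.inter (hα.1 i))]
  simp only [Set.inter_comm]

lemma IsPartition.sum_measureReal_eq_one [IsProbabilityMeasure μ] {α : ι → Set X}
    (hα : IsPartition μ α) : ∑ i, μ.real (α i) = 1 := by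
  simpa using hα.sum_measureReal_inter_s6 MeasurableSet.univ

lemma IsPartition.sum_div_measureReal_eq_one [IsFiniteMeasure μ] {α : ι → Set X}
    (hα : IsPartition μ α) {B : Set X} (hB : MeasurableSet B) (h : μ.real B ≠ 0) :
    ∑ i, μ.real (α i ∩ B) / μ.real B = 1 := by
  rw [← Finset.sum_div, hα.sum_measureReal_inter_s6 hB, div_self h]

lemma IsPartition.partEntropy_le_log_card [IsProbabilityMeasure μ] {α : ι → Set X}
    (hα : IsPartition μ α) : partEntropy μ α ≤ log (Fintype.card ι) := by
  have := sum_negMulLog_le Finset.univ (c := fun i => μ.real (α i)) fun _ _ => measureReal_nonneg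
  rwa [hα.sum_measureReal_eq_one, negMulLog_one, one_mul, add_zero, Finset.card_univ] at this

lemma IsPartition.sum_negMulLog_inter_eq_condEntropy'_add [IsFiniteMeasure μ] {α : ι → Set X}
    (hα : IsPartition μ α) {β : κ → Set X} (hβ : ∀ j, MeasurableSet (β j)) :
    ∑ p : ι × κ, negMulLog (μ.real (α p.1 ∩ β p.2)) = condEntropy' μ α β + partEntropy μ β := by
  have hcell : ∀ j, ∑ i, negMulLog (μ.real (α i ∩ β j)) =
      μ.real (β j) * ∑ i, negMulLog (μ.real (α i ∩ β j) / μ.real (β j)) +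
        negMulLog (μ.real (β j)) := by
    intro j
    have hmass : (∑ i, μ.real (α i ∩ β j) / μ.real (β j)) * negMulLog (μ.real (β j)) =
        negMulLog (μ.real (β j)) := by
      rcases eq_or_ne (μ.real (β j)) 0 with h | h
      · simp [h]
      · rw [hα.sum_div_measureReal_eq_one (hβ j) h, one_mul]
    calc ∑ i, negMulLog (μ.real (α i ∩ β j))
        = ∑ i, negMulLog (μ.real (β j) * (μ.real (α i ∩ β j) / μ.real (β j))) := by
          simp only [measureReal_mul_inter_div]
      _ = _ := by
          simp only [negMulLog_mul, Finset.sum_add_distrib, ← Finset.sum_mul, ← Finset.mul_sum,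
            hmass]
          ring
  rw [Fintype.sum_prod_type_right, Finset.sum_congr rfl fun j _ => hcell j,
    Finset.sum_add_distrib, condEntropy'_eq]
  rfl

end Partitions

section Join

variable {μ : Measure X} {ι : Type*} {n : ℕ}

def joinPartition (A : Fin n → ι → Set X) : (Fin n → ι) → Set X := fun f => ⋂ i, A i (f i)

lemma isPartition_joinPartition {A : Fin n → ι → Set X} (hA : ∀ i, IsPartition μ (A i)) :
    IsPartition μ (joinPartition A) := by
  refine ⟨fun f => MeasurableSet.iInter fun i => (hA i).1 _, fun f g hfg => ?_, ?_⟩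
  · obtain ⟨i, hi⟩ := Function.ne_iff.1 hfg
    exact ((hA i).2.1 hi).mono (Set.iInter_subset _ i) (Set.iInter_subset _ i)
  · have hcover : (⋃ f, joinPartition A f) = ⋂ i, ⋃ j, A i j := iInf_iSup_eq.symm
    rw [hcover, Set.compl_iInter]
    exact measure_iUnion_null fun i => (hA i).2.2

variable [Fintype ι]

lemma jointEntropy_cons [IsFiniteMeasure μ] {α : ι → Set X} (hα : IsPartition μ α)
    {A : Fin n → ι → Set X} (hA : ∀ i j, MeasurableSet (A i j)) :
    jointEntropy μ (Fin.cons α A : Fin (n + 1) → ι → Set X) =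
      condEntropy' μ α (joinPartition A) + jointEntropy μ A := by
  have hinter : ∀ x g, ⋂ i, (Fin.cons α A : Fin (n + 1) → ι → Set X) i (Fin.cons x g i) =
      α x ∩ joinPartition A g := by
    intro x g
    ext y
    simp [joinPartition, Fin.forall_fin_succ]
  rw [jointEntropy, ← (Fin.consEquiv fun _ => ι).sum_comp]
  simp only [Fin.consEquiv_apply, hinter]
  exact hα.sum_negMulLog_inter_eq_condEntropy'_add fun g => MeasurableSet.iInter fun i => hA i _

lemma jointEntropy_le [IsProbabilityMeasure μ] {A : Fin n → ι → Set X}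
    (hA : ∀ i, IsPartition μ (A i)) : jointEntropy μ A ≤ n * log (Fintype.card ι) := by
  have := (isPartition_joinPartition hA).partEntropy_le_log_card
  rwa [Fintype.card_fun, Fintype.card_fin, Nat.cast_pow, log_pow] at this

end Join

noncomputable def majorityAtom {ι : Type*} [Finite ι] [Nonempty ι] (μ : Measure X)
    (α : ι → Set X) (B : Set X) : ι :=
  (Finite.exists_max fun i => μ (α i ∩ B)).choose

section Fano

variable {μ : Measure X} {ι κ : Type*} [Fintype ι] [Fintype κ]

lemma measure_inter_le_majorityAtom [Nonempty ι] (α : ι → Set X) (B : Set X) (i : ι) :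
    μ (α i ∩ B) ≤ μ (α (majorityAtom μ α B) ∩ B) :=
  (Finite.exists_max fun i => μ (α i ∩ B)).choose_spec i

lemma sum_measureReal_sdiff_majorityAtom_le [Nonempty ι] [IsFiniteMeasure μ] {α : ι → Set X}
    (hα : IsPartition μ α) {γ : κ → Set X} (hγ : ∀ k, MeasurableSet (γ k)) :
    ∑ k, μ.real (γ k \ α (majorityAtom μ α (γ k))) ≤ condEntropy' μ α γ := by
  rw [condEntropy'_eq]
  refine Finset.sum_le_sum fun k _ => ?_
  set m := majorityAtom μ α (γ k)
  rcases (measureReal_nonneg (μ := μ) (s := γ k)).eq_or_lt with hq | hq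
  · have : μ.real (γ k \ α m) = 0 :=
      le_antisymm (hq ▸ measureReal_mono Set.sdiff_subset) measureReal_nonneg
    simp [this, ← hq]
  · have hm : ∀ i, μ.real (α i ∩ γ k) / μ.real (γ k) ≤ μ.real (α m ∩ γ k) / μ.real (γ k) :=
      fun i => div_le_div_of_nonneg_right (ENNReal.toReal_mono (measure_ne_top _ _)
        (measure_inter_le_majorityAtom α (γ k) i)) hq.le
    have hfano := one_sub_le_sum_negMulLog_s6 (fun i => div_nonneg measureReal_nonneg hq.le)
      (hα.sum_div_measureReal_eq_one (hγ k) hq.ne') hm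
    have hdiff : μ.real (γ k \ α m) = μ.real (γ k) * (1 - μ.real (α m ∩ γ k) / μ.real (γ k)) := by
      have := measureReal_inter_add_sdiff (μ := μ) (s := γ k) (hα.1 m)
      rw [mul_one_sub, measureReal_mul_inter_div, Set.inter_comm]
      linarith
    rw [hdiff]
    exact mul_le_mul_of_nonneg_left hfano hq.le

lemma condEntropy'_le_fanoBound [IsProbabilityMeasure μ] {α α' : ι → Set X}
    (hα : IsPartition μ α) (hα' : IsPartition μ α') :
    condEntropy' μ α α' ≤ fanoBound (Fintype.card ι) (∑ j, μ.real (α' j \ α j)) := by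
  set c : ι → ι → ℝ := fun j i => μ.real (α i ∩ α' j) / μ.real (α' j)
  have hc_le_one : ∀ j, c j j ≤ 1 := fun j =>
    div_le_one_of_le₀ (measureReal_mono Set.inter_subset_right) measureReal_nonneg
  have hrow : ∀ j, μ.real (α' j) * ∑ i, negMulLog (c j i) ≤
      μ.real (α' j) * fanoBound (Fintype.card ι) (1 - c j j) := by
    intro j
    rcases eq_or_ne (μ.real (α' j)) 0 with h | h
    · simp [h]
    · exact mul_le_mul_of_nonneg_left (sum_negMulLog_le_fanoBound
        (fun i => div_nonneg measureReal_nonneg measureReal_nonneg)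
        (hα.sum_div_measureReal_eq_one (hα'.1 j) h) j) measureReal_nonneg
  have hmismatch : ∀ j, μ.real (α' j) * (1 - c j j) = μ.real (α' j \ α j) := by
    intro j
    have := measureReal_inter_add_sdiff (μ := μ) (s := α' j) (hα.1 j)
    rw [mul_one_sub, measureReal_mul_inter_div, Set.inter_comm]
    linarith
  calc condEntropy' μ α α' = ∑ j, μ.real (α' j) * ∑ i, negMulLog (c j i) := condEntropy'_eq α α'
    _ ≤ ∑ j, μ.real (α' j) * fanoBound (Fintype.card ι) (1 - c j j) :=
      Finset.sum_le_sum fun j _ => hrow j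
    _ ≤ fanoBound (Fintype.card ι) (∑ j, μ.real (α' j) * (1 - c j j)) :=
      (concaveOn_fanoBound _).le_map_sum (fun j _ => measureReal_nonneg)
        hα'.sum_measureReal_eq_one fun j _ => sub_nonneg.2 (hc_le_one j)
    _ = _ := by simp only [hmismatch]

lemma sum_measureReal_sdiff_le [IsFiniteMeasure μ] {α α' : ι → Set X}
    (hα : ∀ i, MeasurableSet (α i)) (hα' : IsPartition μ α') {γ : κ → Set X}
    (hγ : μ (⋃ k, γ k)ᶜ = 0) (m : κ → ι) :
    ∑ j, μ.real (α' j \ α j) ≤ ∑ k, μ.real (γ k \ α (m k)) + ∑ k, μ.real (γ k \ α' (m k)) := by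
  have hsub : (⋃ j, α' j \ α j) ⊆ (⋃ k, γ k)ᶜ ∪ ⋃ k, (γ k \ α (m k) ∪ γ k \ α' (m k)) := by
    intro x hx
    obtain ⟨j, hxα', hxα⟩ := Set.mem_iUnion.1 hx
    by_cases hxγ : x ∈ ⋃ k, γ k
    · obtain ⟨k, hxγk⟩ := Set.mem_iUnion.1 hxγ
      refine Or.inr (Set.mem_iUnion.2 ⟨k, ?_⟩)
      by_cases hxmk : x ∈ α' (m k)
      · have hj : m k = j := hα'.2.1.eq (Set.not_disjoint_iff.2 ⟨x, hxmk, hxα'⟩)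
        exact Or.inl ⟨hxγk, hj ▸ hxα⟩
      · exact Or.inr ⟨hxγk, hxmk⟩
    · exact Or.inl hxγ
  calc ∑ j, μ.real (α' j \ α j) = μ.real (⋃ j, α' j \ α j) :=
        (measureReal_iUnion_fintype (fun i j hij => (hα'.2.1 hij).mono Set.sdiff_subset
          Set.sdiff_subset) fun j => (hα'.1 j).diff (hα j)).symm
    _ ≤ μ.real (⋃ k, γ k)ᶜ + μ.real (⋃ k, (γ k \ α (m k) ∪ γ k \ α' (m k))) :=
        (measureReal_mono hsub).trans (measureReal_union_le _ _)
    _ ≤ 0 + ∑ k, (μ.real (γ k \ α (m k)) + μ.real (γ k \ α' (m k))) := by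
        gcongr
        · exact ((measureReal_eq_zero_iff).2 hγ).le
        · exact (measureReal_iUnion_fintype_le _).trans
            (Finset.sum_le_sum fun k _ => measureReal_union_le _ _)
    _ = _ := by rw [zero_add, Finset.sum_add_distrib]

lemma rokhlinDist_lt_of_majorityAtom_eq [Nonempty ι] [IsProbabilityMeasure μ] {ε δ : ℝ}
    (hδ : ∀ t, 0 ≤ t → t < δ → fanoBound (Fintype.card ι) t < ε / 2)
    {α α' : ι → Set X} (hα : IsPartition μ α) (hα' : IsPartition μ α')
    {γ : κ → Set X} (hγ : IsPartition μ γ)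
    (hcode : ∀ k, majorityAtom μ α (γ k) = majorityAtom μ α' (γ k))
    (hsmall : condEntropy' μ α γ + condEntropy' μ α' γ < δ) : rokhlinDist μ α α' < ε := by
  have hE := sum_measureReal_sdiff_majorityAtom_le hα hγ.1
  have hE' := sum_measureReal_sdiff_majorityAtom_le hα' hγ.1
  simp only [← hcode] at hE'
  have h₁ := sum_measureReal_sdiff_le hα.1 hα' hγ.2.2 fun k => majorityAtom μ α (γ k)
  have h₂ := sum_measureReal_sdiff_le hα'.1 hα hγ.2.2 fun k => majorityAtom μ α (γ k)
  have hF₁ := hδ (∑ j, μ.real (α' j \ α j)) (Finset.sum_nonneg fun _ _ => measureReal_nonneg)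
    (by linarith)
  have hF₂ := hδ (∑ j, μ.real (α j \ α' j)) (Finset.sum_nonneg fun _ _ => measureReal_nonneg)
    (by linarith)
  have := condEntropy'_le_fanoBound hα hα'
  have := condEntropy'_le_fanoBound hα' hα
  rw [rokhlinDist]
  linarith

end Fano

lemma exists_finset_forall_lt_of_code {α β : Type*} [Finite β] (d : α → α → ℝ) {K : Set α}
    {ε : ℝ} (code : α → β) (h : ∀ a ∈ K, ∀ b ∈ K, code a = code b → d a b < ε) :
    ∃ F : Finset α, ↑F ⊆ K ∧ ∀ a ∈ K, ∃ b ∈ F, d a b < ε := by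
  rcases K.eq_empty_or_nonempty with rfl | ⟨a₀, -⟩
  · exact ⟨∅, by simp, by simp⟩
  have : Nonempty α := ⟨a₀⟩
  set rep := Function.invFunOn code K
  refine ⟨((Set.toFinite (code '' K)).image rep).toFinset, ?_, fun a ha => ?_⟩
  · rintro _ hb
    obtain ⟨_, ⟨a, ha, rfl⟩, rfl⟩ := (Set.Finite.mem_toFinset _).1 hb
    exact Function.invFunOn_mem ⟨a, ha, rfl⟩
  · refine ⟨rep (code a), (Set.Finite.mem_toFinset _).2 ⟨_, ⟨a, ha, rfl⟩, rfl⟩, ?_⟩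
    exact h a ha _ (Function.invFunOn_mem ⟨a, ha, rfl⟩) (Function.invFunOn_eq ⟨a, ha, rfl⟩).symm

section PatternEntropy

variable {μ : Measure X} [IsProbabilityMeasure μ] {ι : Type*} [Fintype ι]

lemma exists_le_condEntropy'_of_not_totBddIn [Nonempty ι] {K : Set (ι → Set X)}
    (hK : ∀ α ∈ K, IsPartition μ α) (hK_tb : ¬ TotBddIn (rokhlinDist μ) K) :
    ∃ δ > 0, ∀ {κ : Type*} [Fintype κ] (γ : κ → Set X), IsPartition μ γ →
      ∃ α ∈ K, δ ≤ condEntropy' μ α γ := by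
  simp only [TotBddIn, not_forall, not_exists, not_and, not_lt] at hK_tb
  obtain ⟨ε, hε, hfar⟩ := hK_tb
  obtain ⟨δ, hδ, hfano⟩ := exists_pos_forall_fanoBound_lt (Fintype.card ι) (half_pos hε)
  refine ⟨δ / 2, half_pos hδ, fun γ hγ => ?_⟩
  by_contra! hsmall
  obtain ⟨F, hFK, hF⟩ := exists_finset_forall_lt_of_code (rokhlinDist μ)
    (fun α k => majorityAtom μ α (γ k)) fun α hα α' hα' hcode =>
      rokhlinDist_lt_of_majorityAtom_eq hfano (hK α hα) (hK α' hα') hγ (congrFun hcode)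
        (by linarith [hsmall α hα, hsmall α' hα'])
  obtain ⟨a, haK, ha⟩ := hfar F hFK
  obtain ⟨b, hbF, hab⟩ := hF a haK
  exact (ha b hbF).not_gt hab

lemma exists_le_jointEntropy {K : Set (ι → Set X)} (hK : ∀ α ∈ K, IsPartition μ α) {δ : ℝ}
    (hfar : ∀ {n : ℕ} (A : Fin n → ι → Set X), (∀ i, A i ∈ K) →
      ∃ α ∈ K, δ ≤ condEntropy' μ α (joinPartition A)) (n : ℕ) :
    ∃ A : Fin n → ι → Set X, (∀ i, A i ∈ K) ∧ n * δ ≤ jointEntropy μ A := by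
  induction n with
  | zero => exact ⟨Fin.elim0, fun i => i.elim0, by simp [jointEntropy]⟩
  | succ n ih =>
    obtain ⟨A, hAK, hA⟩ := ih
    obtain ⟨α, hαK, hα⟩ := hfar A hAK
    refine ⟨Fin.cons α A, Fin.cases hαK hAK, ?_⟩
    rw [jointEntropy_cons (hK α hαK) fun i => (hK _ (hAK i)).1]
    push_cast
    linarith

lemma le_maxPatternEntropy {r : ℕ} {K : Set (Fin r → Set X)} (hK : ∀ α ∈ K, IsPartition μ α) {δ : ℝ}
    (h : ∀ n : ℕ, ∃ A : Fin n → Fin r → Set X, (∀ i, A i ∈ K) ∧ n * δ ≤ jointEntropy μ A) :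
    δ ≤ maxPatternEntropy μ K := by
  have hub : ∀ n, ∀ H ∈ {H : ℝ | ∃ A : Fin n → Fin r → Set X, (∀ i, A i ∈ K) ∧
      H = jointEntropy μ A}, H ≤ n * log r := by
    rintro n _ ⟨A, hA, rfl⟩
    simpa using jointEntropy_le fun i => hK _ (hA i)
  have hlow : ∀ n : ℕ, n * δ ≤ patternSup μ K n := fun n =>
    let ⟨A, hA, hδ⟩ := h n
    hδ.trans (le_csSup ⟨_, hub n⟩ ⟨A, hA, rfl⟩)
  have hup : ∀ n : ℕ, patternSup μ K n ≤ n * log r := fun n =>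
    let ⟨A, hA, _⟩ := h n
    csSup_le ⟨_, A, hA, rfl⟩ (hub n)
  refine le_limsup_of_frequently_le (Eventually.frequently ?_) (isBoundedUnder_of ⟨log r, ?_⟩)
  · filter_upwards [eventually_gt_atTop 0] with n hn
    rw [le_div_iff₀ (by exact_mod_cast hn)]
    linarith [hlow n]
  · exact fun n => div_le_of_le_mul₀ n.cast_nonneg (log_natCast_nonneg r) (by linarith [hup n])

end PatternEntropy

/-- If `K ⊆ 𝔓_r` has zero maximal pattern entropy,
then `K` is precompact in the Rokhlin metric. -/
theorem precompact_of_maxPatternEntropy_eq_zero (μ : Measure X) [IsProbabilityMeasure μ]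
    {r : ℕ} (hr : 2 ≤ r) (K : Set (Fin r → Set X)) (hK : ∀ α ∈ K, IsPartition μ α)
    (h0 : maxPatternEntropy μ K = 0) :
    TotBddIn (rokhlinDist μ) K := by
  have : Nonempty (Fin r) := ⟨⟨0, by omega⟩⟩
  by_contra hK_tb
  obtain ⟨δ, hδ, hfar⟩ := exists_le_condEntropy'_of_not_totBddIn hK hK_tb
  have hgrowth := exists_le_jointEntropy hK fun A hA =>
    hfar _ (isPartition_joinPartition fun i => hK _ (hA i))
  linarith [le_maxPatternEntropy hK hgrowth]
end

section
/- If a sequence (E_n) of finite subsets of 𝔓_r is mean equicontinuous (in limsup form), then the mean equicontinuity can be upgraded to a uniform version: for every ε > 0 there exist pairwise disjoint measurable sets B_1,…,B_k with μ(⋃B_i) > 1−ε such that whenever x, y lie in the same B_i, H_{E_n}(x,y) < ε for all n ∈ ℕ. -/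
open MeasureTheory Filter Real Topology
open scoped symmDiff ENNReal

variable {X : Type*} [MeasurableSpace X]

/-! Apply mean equicontinuity at scale `ε / 2` and fix a base point `x_i` in each `B_i`. The
points of `B_i` that stay `ε / 2`-close to `x_i` from time `N` on exhaust `B_i` as `N → ∞`, so for
one large `N` they carry almost all of the mass, and by the triangle inequality any two of them
are `ε`-close for every `n ≥ N`. The finitely many partitions in `E_0, …, E_{N-1}` are dealt with
by cutting these sets along their common refinement, which costs only a null set: two points in
one cell are separated by none of them, so their Hamming distance vanishes for `n < N`. -/

open Set

section HammingDistance

set_option linter.unusedSectionVars false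

variable {r : ℕ}

lemma hamDist_le_one (E : Finset (Fin r → Set X)) (x y : X) : hamDist E x y ≤ 1 := by
  classical
  exact div_le_one_of_le₀ (by exact_mod_cast Finset.card_filter_le _ _) (Nat.cast_nonneg _)

lemma hamDist_comm (E : Finset (Fin r → Set X)) (x y : X) : hamDist E x y = hamDist E y x := by
  classical
  simp only [hamDist]
  congr 3
  ext α
  simp only [and_comm]

lemma hamDist_triangle {E : Finset (Fin r → Set X)}
    (hE : ∀ α ∈ E, Pairwise (Function.onFun Disjoint α)) (x y z : X) :
    hamDist E x z ≤ hamDist E x y + hamDist E y z := by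
  classical
  rw [hamDist, hamDist, hamDist, ← add_div]
  gcongr
  norm_cast
  refine (Finset.card_le_card fun α hα => ?_).trans (Finset.card_union_le _ _)
  simp only [Finset.mem_filter, Finset.mem_union] at hα ⊢
  by_contra! h
  obtain ⟨i, hxi, hyi⟩ := h.1 hα.1
  obtain ⟨j, hyj, hzj⟩ := h.2 hα.1
  obtain rfl : i = j := by_contra fun hij => (hE α hα.1 hij).notMem_of_mem_left hyi hyj
  exact hα.2 i ⟨hxi, hzj⟩

lemma hamDist_eq_zero_of_forall_exists_mem {E : Finset (Fin r → Set X)} {x y : X}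
    (h : ∀ α ∈ E, ∃ i, x ∈ α i ∧ y ∈ α i) : hamDist E x y = 0 := by
  classical
  rw [hamDist, Finset.filter_eq_empty_iff.2 fun α hα hsep => ?_, Finset.card_empty,
    Nat.cast_zero, zero_div]
  obtain ⟨i, hi⟩ := h α hα
  exact hsep i hi

lemma measurable_hamDist {E : Finset (Fin r → Set X)} (hE : ∀ α ∈ E, ∀ i, MeasurableSet (α i))
    (x : X) : Measurable (hamDist E x) := by
  classical
  have hsep : ∀ α ∈ E, MeasurableSet {y | ∀ i, ¬(x ∈ α i ∧ y ∈ α i)} := fun α hα => by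
    convert MeasurableSet.biInter (to_countable {i | x ∈ α i}) fun i _ => (hE α hα i).compl
    ext y
    simp
  unfold hamDist
  simp only [Finset.card_filter, Nat.cast_sum, Nat.cast_ite, Nat.cast_one, Nat.cast_zero]
  exact (Finset.measurable_sum _ fun α hα =>
    Measurable.ite (hsep α hα) measurable_const measurable_const).div_const _

end HammingDistance

lemma exists_monotone_exhaustion_hamDist_lt {r : ℕ} {E : ℕ → Finset (Fin r → Set X)}
    (hm : ∀ n, ∀ α ∈ E n, ∀ i, MeasurableSet (α i))
    (hd : ∀ n, ∀ α ∈ E n, Pairwise (Function.onFun Disjoint α))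
    {B : Set X} (hB : MeasurableSet B) {ε : ℝ}
    (hlim : ∀ x y, x ∈ B → y ∈ B → limsup (fun n => hamDist (E n) x y) atTop < ε / 2) :
    ∃ C : ℕ → Set X, Monotone C ∧ (∀ N, MeasurableSet (C N)) ∧ (∀ N, C N ⊆ B) ∧
      B ⊆ ⋃ N, C N ∧ ∀ N, ∀ y ∈ C N, ∀ z ∈ C N, ∀ n ≥ N, hamDist (E n) y z < ε := by
  rcases B.eq_empty_or_nonempty with rfl | ⟨x, hx⟩
  · exact ⟨fun _ => ∅, monotone_const, fun _ => .empty, fun _ => subset_rfl, empty_subset _,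
      by simp⟩
  refine ⟨fun N => B ∩ ⋂ n ≥ N, hamDist (E n) x ⁻¹' Iio (ε / 2), ?mono, ?meas,
    fun N => inter_subset_left, ?exhaust, ?close⟩
  case mono =>
    exact fun N M hNM => inter_subset_inter_right _ (biInter_mono (fun n hn => hNM.trans hn)
      fun _ _ => subset_rfl)
  case meas =>
    exact fun N => hB.inter (.biInter (to_countable _) fun n _ =>
      measurable_hamDist (hm n) x measurableSet_Iio)
  case exhaust =>
    intro y hy
    have hbdd : IsBoundedUnder (· ≤ ·) atTop fun n => hamDist (E n) x y :=
      isBoundedUnder_of ⟨1, fun n => hamDist_le_one _ _ _⟩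
    obtain ⟨N, hN⟩ := eventually_atTop.1 (eventually_lt_of_limsup_lt (hlim x y hx hy) hbdd)
    exact mem_iUnion.2 ⟨N, hy, mem_iInter₂.2 hN⟩
  case close =>
    intro N y hy z hz n hn
    calc hamDist (E n) y z ≤ hamDist (E n) x y + hamDist (E n) x z := by
          rw [hamDist_comm _ x y]; exact hamDist_triangle (hd n) y x z
      _ < ε / 2 + ε / 2 := add_lt_add (mem_iInter₂.1 hy.2 n hn) (mem_iInter₂.1 hz.2 n hn)
      _ = ε := add_halves ε

lemma exists_lt_measure_of_subset_iUnion {α : Type*} [MeasurableSpace α] {μ : Measure α}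
    {s : ℕ → Set α} (hs : Monotone s) {t : Set α} (ht : t ⊆ ⋃ n, s n) {c : ℝ≥0∞}
    (hc : c < μ t) : ∃ n, c < μ (s n) :=
  ((tendsto_measure_iUnion_atTop hs).eventually_const_lt (hc.trans_le (measure_mono ht))).exists

lemma IsPartition.ae_exists_mem {μ : Measure X} {ι : Type*} {α : ι → Set X}
    (h : IsPartition μ α) : ∀ᵐ x ∂μ, ∃ i, x ∈ α i :=
  (measure_eq_zero_iff_ae_notMem.1 h.2.2).mono fun x hx => by simpa using hx

lemma exists_fin_refinement {ι κ : Type*} [Fintype ι] [Fintype κ] {μ : Measure X}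
    {F : Finset (ι → Set X)} (hF : ∀ α ∈ F, IsPartition μ α) {D : κ → Set X}
    (hDm : ∀ i, MeasurableSet (D i)) (hDd : Pairwise (Function.onFun Disjoint D)) :
    ∃ (k : ℕ) (B : Fin k → Set X), (∀ j, MeasurableSet (B j)) ∧
      Pairwise (Function.onFun Disjoint B) ∧ μ (⋃ i, D i) ≤ μ (⋃ j, B j) ∧
      ∀ j, ∃ i, B j ⊆ D i ∧ ∀ α ∈ F, ∃ a, B j ⊆ α a := by
  classical
  let cell (t : κ × (F → ι)) : Set X := D t.1 ∩ ⋂ α : F, α.1 (t.2 α)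
  have hcell_disj : Pairwise (Function.onFun Disjoint cell) := by
    rintro ⟨i, g⟩ ⟨i', g'⟩ hne
    by_cases hii : i = i'
    · subst hii
      obtain ⟨α, hα⟩ := Function.ne_iff.1 fun hg => hne (congrArg (Prod.mk i) hg)
      exact Disjoint.mono (inter_subset_right.trans (iInter_subset _ α))
        (inter_subset_right.trans (iInter_subset _ α)) ((hF α α.2).2.1 hα)
    · exact Disjoint.mono inter_subset_left inter_subset_left (hDd hii)
  have hcover : (⋃ i, D i) ≤ᵐ[μ] (⋃ t, cell t) := by
    filter_upwards [(eventually_all_finset F).2 fun α hα => (hF α hα).ae_exists_mem]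
      with x hx hxD
    obtain ⟨i, hxi⟩ := mem_iUnion.1 hxD
    choose g hg using fun α : F => hx α α.2
    show x ∈ ⋃ t, cell t
    exact mem_iUnion.2 ⟨(i, g), hxi, mem_iInter.2 hg⟩
  let e := (Fintype.equivFin (κ × (F → ι))).symm
  refine ⟨_, cell ∘ e, fun j => (hDm _).inter (.iInter fun α => (hF α α.2).1 _),
    hcell_disj.comp_of_injective e.injective, ?_, fun j => ⟨(e j).1, inter_subset_left, ?_⟩⟩
  · rw [Function.comp_def, e.surjective.iUnion_comp cell]
    exact measure_mono_ae hcover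
  · exact fun α hα => ⟨(e j).2 ⟨α, hα⟩, inter_subset_right.trans (iInter_subset _ (⟨α, hα⟩ : F))⟩

theorem meanEquicontinuous_uniform_upgrade_general (μ : Measure X)
    {r : ℕ} (E : ℕ → Finset (Fin r → Set X))
    (hpart : ∀ n, ∀ α ∈ E n, IsPartition μ α)
    (hme : ∀ ε > (0 : ℝ), ∃ (k : ℕ) (B : Fin k → Set X),
      (∀ i, MeasurableSet (B i)) ∧ Pairwise (Function.onFun Disjoint B) ∧
      μ (⋃ i, B i) > 1 - ENNReal.ofReal ε ∧
      ∀ (i : Fin k) (x y : X), x ∈ B i → y ∈ B i →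
        limsup (fun n => hamDist (E n) x y) atTop < ε) :
    ∀ ε > (0 : ℝ), ∃ (k : ℕ) (B : Fin k → Set X),
      (∀ i, MeasurableSet (B i)) ∧ Pairwise (Function.onFun Disjoint B) ∧
      μ (⋃ i, B i) > 1 - ENNReal.ofReal ε ∧
      ∀ (i : Fin k) (x y : X), x ∈ B i → y ∈ B i →
        ∀ n : ℕ, hamDist (E n) x y < ε := by
  classical
  intro ε hε
  obtain ⟨k, B, hBm, hBd, hBμ, hBlim⟩ := hme (ε / 2) (half_pos hε)
  choose C hCmono hCm hCB hBC hCclose using fun i => exists_monotone_exhaustion_hamDist_lt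
    (fun n α hα => (hpart n α hα).1) (fun n α hα => (hpart n α hα).2.1) (hBm i) (hBlim i)
  obtain ⟨N, hN⟩ : ∃ N, 1 - ENNReal.ofReal ε < μ (⋃ i, C i N) :=
    exists_lt_measure_of_subset_iUnion (fun N M h => iUnion_mono fun i => hCmono i h)
      (iUnion_subset fun i => (hBC i).trans (iUnion_mono fun N => subset_iUnion (C · N) i))
      ((tsub_le_tsub_left (ENNReal.ofReal_le_ofReal (half_le_self hε.le)) 1).trans_lt hBμ)
  have hpart_before : ∀ α ∈ (Finset.range N).biUnion E, IsPartition μ α := fun α hα => by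
    obtain ⟨n, -, hα⟩ := Finset.mem_biUnion.1 hα
    exact hpart n α hα
  obtain ⟨m, B', hB'm, hB'd, hB'μ, hB'fine⟩ := exists_fin_refinement hpart_before
    (fun i => hCm i N) (hBd.mono fun i j h => Disjoint.mono (hCB i N) (hCB j N) h)
  refine ⟨m, B', hB'm, hB'd, hN.trans_le hB'μ, fun j x y hx hy n => ?_⟩
  obtain ⟨i, hji, hjF⟩ := hB'fine j
  rcases lt_or_ge n N with hn | hn
  · rw [hamDist_eq_zero_of_forall_exists_mem fun α hα => ?_]
    · exact hε
    obtain ⟨a, ha⟩ := hjF α (Finset.mem_biUnion.2 ⟨n, Finset.mem_range.2 hn, hα⟩)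
    exact ⟨a, ha hx, ha hy⟩
  · exact hCclose i N x (hji hx) y (hji hy) n hn

/-- If a sequence `(E_n)` of finite subsets of `𝔓_r` is mean equicontinuous
(in `limsup` form), then for every `ε > 0` there are pairwise disjoint measurable sets
`B_1,…,B_k` with `μ(⋃ B_i) > 1 − ε` such that points in a common `B_i` are `ε`-close in
`H_{E_n}` for **all** `n`. -/
theorem meanEquicontinuous_uniform_upgrade (μ : Measure X) [IsProbabilityMeasure μ]
    {r : ℕ} (hr : 2 ≤ r) (E : ℕ → Finset (Fin r → Set X))
    (hpart : ∀ n, ∀ α ∈ E n, IsPartition μ α)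
    (hme : ∀ ε > (0 : ℝ), ∃ (k : ℕ) (B : Fin k → Set X),
      (∀ i, MeasurableSet (B i)) ∧ Pairwise (Function.onFun Disjoint B) ∧
      μ (⋃ i, B i) > 1 - ENNReal.ofReal ε ∧
      ∀ (i : Fin k) (x y : X), x ∈ B i → y ∈ B i →
        limsup (fun n => hamDist (E n) x y) atTop < ε) :
    ∀ ε > (0 : ℝ), ∃ (k : ℕ) (B : Fin k → Set X),
      (∀ i, MeasurableSet (B i)) ∧ Pairwise (Function.onFun Disjoint B) ∧
      μ (⋃ i, B i) > 1 - ENNReal.ofReal ε ∧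
      ∀ (i : Fin k) (x y : X), x ∈ B i → y ∈ B i →
        ∀ n : ℕ, hamDist (E n) x y < ε :=
  meanEquicontinuous_uniform_upgrade_general μ E hpart hme
end

section
/- For a topological dynamical system (X,d,G) with G-invariant Borel probability measure μ and a subset S of G: μ has bounded (S,d)-mean complexity (covering numbers 𝒞_d(F,ε) with respect to the averaged metric d̄_F(x,y) = (1/|F|)Σ_{g∈F} d(gx,gy) are bounded uniformly over finite F ⊂ S, for each ε) if and only if every finite measurable partition of X has bounded mean complexity along S (covering numbers with respect to the normalized Hamming distance H_{F⁻¹α} are bounded uniformly over finite F ⊂ S, for each ε). -/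
open MeasureTheory Filter Real Topology
open scoped symmDiff ENNReal

variable {X : Type*} [MeasurableSpace X]

open Classical in
/-- `H_{F⁻¹α}(x,y) = (1/|F|)|{g ∈ F : gx, gy lie in different atoms of α}|`. -/
noncomputable def hamOrbit {G : Type*} [Group G] [MulAction G X] {ι : Type*}
    (α : ι → Set X) (F : Finset G) (x y : X) : ℝ :=
  ((F.filter fun g => ∀ i, ¬(g • x ∈ α i ∧ g • y ∈ α i)).card : ℝ) / F.card

/-- The averaged metric `d̄_F(x,y) = (1/|F|) Σ_{g∈F} d(gx,gy)`. -/
noncomputable def dBar [PseudoMetricSpace X] {G : Type*} [Group G] [MulAction G X]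
    (F : Finset G) (x y : X) : ℝ :=
  (∑ g ∈ F, dist (g • x) (g • y)) / F.card

/-!
If every atom of a partition `α` has diameter at most `ε/2`, then
`d̄_F(x,y) ≤ diam X · H_{F⁻¹α}(x,y) + ε/2`, so Hamming balls of small radius lie in `d̄_F`-balls.

Conversely, approximate the atoms of `α` from inside by compact sets `Kᵢ`; these are pairwise at
distance at least some `δ > 0`, and their union misses a set `U` of small measure. Then
`H_{F⁻¹α}(y,z) ≤ d̄_F(y,z)/δ + v(y) + v(z)`, where `v(y)` is the fraction of times `g ∈ F` with
`g • y ∈ U`. By invariance `∫ v = μ U`, so by Markov's inequality the points with large `v` form a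
set of small measure, and off that set small `d̄_F`-balls lie in small Hamming balls.
-/

section MetricAction

variable {X : Type*} {G : Type*} [Group G] [MulAction G X]

open Classical in
theorem hamOrbit_eq_sum_ite {ι : Type*} (α : ι → Set X) (F : Finset G) (x y : X) :
    hamOrbit α F x y =
      (∑ g ∈ F, if ∀ i, ¬(g • x ∈ α i ∧ g • y ∈ α i) then (1 : ℝ) else 0) / F.card := by
  rw [hamOrbit, Finset.sum_boole]

noncomputable def visitFreq (F : Finset G) (U : Set X) (x : X) : ℝ :=
  (∑ g ∈ F, U.indicator (1 : X → ℝ) (g • x)) / F.card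

variable [MetricSpace X]

theorem exists_pos_le_dist_of_pairwise_disjoint {ι : Type*} [Finite ι] {K : ι → Set X}
    (hK : ∀ i, IsCompact (K i)) (hd : Pairwise (Function.onFun Disjoint K)) :
    ∃ δ > 0, ∀ i j, i ≠ j → ∀ x ∈ K i, ∀ y ∈ K j, δ ≤ dist x y := by
  have hpair : ∀ p : ι × ι, ∀ᶠ δ in 𝓝[>] (0 : ℝ),
      p.1 ≠ p.2 → ∀ x ∈ K p.1, ∀ y ∈ K p.2, δ ≤ dist x y := by
    rintro ⟨i, j⟩
    by_cases hij : i = j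
    · exact .of_forall fun _ h => absurd hij h
    obtain ⟨r, hr, hsep⟩ := Metric.exists_pos_forall_lt_edist (hK i) (hK j).isClosed (hd hij)
    filter_upwards [Ioo_mem_nhdsGT (NNReal.coe_pos.2 hr)] with δ hδ _ x hx y hy
    have hr' := hsep x hx y hy
    rw [edist_dist] at hr'
    exact hδ.2.le.trans (ENNReal.coe_lt_ofReal.1 hr').le
  obtain ⟨δ, hδ, hpos⟩ := ((Filter.eventually_all.2 hpair).and self_mem_nhdsWithin).exists
  exact ⟨δ, hpos, fun i j hij => hδ (i, j) hij⟩

theorem dBar_le_add (F : Finset G) (x y z : X) : dBar F y z ≤ dBar F x y + dBar F x z := by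
  rw [dBar, dBar, dBar, ← add_div, ← Finset.sum_add_distrib]
  gcongr with g
  exact dist_triangle_left _ _ _

open Classical in
theorem hamOrbit_le_dBar_div_add_visitFreq {ι : Type*} {α K : ι → Set X} (hKα : ∀ i, K i ⊆ α i)
    {δ : ℝ} (hδ : 0 < δ) (hgap : ∀ i j, i ≠ j → ∀ x ∈ K i, ∀ y ∈ K j, δ ≤ dist x y)
    (F : Finset G) (x y : X) :
    hamOrbit α F x y ≤
      dBar F x y / δ + visitFreq F (⋃ i, K i)ᶜ x + visitFreq F (⋃ i, K i)ᶜ y := by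
  set U := (⋃ i, K i)ᶜ
  have hpoint : ∀ p q : X, (if ∀ i, ¬(p ∈ α i ∧ q ∈ α i) then (1 : ℝ) else 0) ≤
      dist p q / δ + U.indicator 1 p + U.indicator 1 q := by
    intro p q
    have hU : ∀ r, 0 ≤ U.indicator (1 : X → ℝ) r := Set.indicator_nonneg fun _ _ => zero_le_one
    have hd : 0 ≤ dist p q / δ := div_nonneg dist_nonneg hδ.le
    split_ifs with hsplit
    · by_cases hp : p ∈ U
      · simp only [Set.indicator_of_mem hp, Pi.one_apply]
        linarith [hU q]
      by_cases hq : q ∈ U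
      · simp only [Set.indicator_of_mem hq, Pi.one_apply]
        linarith [hU p]
      obtain ⟨i, hpi⟩ := Set.mem_iUnion.1 (Set.not_notMem.1 hp)
      obtain ⟨j, hqj⟩ := Set.mem_iUnion.1 (Set.not_notMem.1 hq)
      have hij : i ≠ j := by
        rintro rfl
        exact hsplit i ⟨hKα i hpi, hKα i hqj⟩
      have : 1 ≤ dist p q / δ := (one_le_div hδ).2 (hgap i j hij p hpi q hqj)
      linarith [hU p, hU q]
    · linarith [hU p, hU q]
  calc hamOrbit α F x y
      ≤ (∑ g ∈ F, (dist (g • x) (g • y) / δ + U.indicator 1 (g • x) + U.indicator 1 (g • y)))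
          / F.card := by
        rw [hamOrbit_eq_sum_ite]
        gcongr with g
        exact hpoint _ _
    _ = dBar F x y / δ + visitFreq F U x + visitFreq F U y := by
        rw [dBar, visitFreq, visitFreq, Finset.sum_add_distrib, Finset.sum_add_distrib,
          ← Finset.sum_div]
        ring

open Classical in
theorem dBar_le_mul_hamOrbit_add {ι : Type*} {α : ι → Set X} {M η : ℝ}
    (hM : ∀ p q : X, dist p q ≤ M) (hη : 0 ≤ η) (hα : ∀ i, ∀ p ∈ α i, ∀ q ∈ α i, dist p q ≤ η)
    (F : Finset G) (x y : X) : dBar F x y ≤ M * hamOrbit α F x y + η := by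
  have hpoint : ∀ p q : X,
      dist p q ≤ M * (if ∀ i, ¬(p ∈ α i ∧ q ∈ α i) then (1 : ℝ) else 0) + η := by
    intro p q
    split_ifs with hsplit
    · linarith [hM p q]
    · simp only [not_forall, not_not] at hsplit
      obtain ⟨i, hp, hq⟩ := hsplit
      linarith [hα i p hp q hq]
  calc dBar F x y
      ≤ (∑ g ∈ F, (M * (if ∀ i, ¬(g • x ∈ α i ∧ g • y ∈ α i) then (1 : ℝ) else 0) + η))
          / F.card := by
        rw [dBar]
        gcongr with g
        exact hpoint _ _
    _ = M * hamOrbit α F x y + F.card * η / F.card := by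
        rw [hamOrbit_eq_sum_ite, Finset.sum_add_distrib, ← Finset.mul_sum, Finset.sum_const,
          nsmul_eq_mul, add_div, mul_div_assoc]
    _ ≤ M * hamOrbit α F x y + η := by
        gcongr
        exact div_le_of_le_mul₀ F.card.cast_nonneg hη (mul_comm _ _).le

end MetricAction

theorem exists_partition_dist_le [MetricSpace X] [CompactSpace X] [OpensMeasurableSpace X]
    (μ : Measure X) {η : ℝ} (hη : 0 < η) :
    ∃ (r : ℕ) (α : Fin r → Set X), IsPartition μ α ∧ ∀ i, ∀ x ∈ α i, ∀ y ∈ α i, dist x y ≤ η := by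
  obtain ⟨t, -, ht, hcover⟩ :=
    finite_cover_balls_of_compact (isCompact_univ (X := X)) (half_pos hη)
  obtain ⟨r, c, -, rfl⟩ := ht.fin_param
  refine ⟨r, disjointed fun i => Metric.ball (c i) (η / 2),
    ⟨fun i => ?_, disjoint_disjointed _, ?_⟩, fun i x hx y hy => ?_⟩
  · rw [disjointed_eq_inter_compl]
    exact measurableSet_ball.inter
      (.iInter fun j => .iInter fun _ => measurableSet_ball.compl)
  · rw [Set.biUnion_range, Set.univ_subset_iff] at hcover
    rw [iUnion_disjointed, hcover, Set.compl_univ, measure_empty]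
  · have hx' := disjointed_subset _ i hx
    have hy' := disjointed_subset _ i hy
    rw [Metric.mem_ball] at hx' hy'
    linarith [dist_triangle_right x y (c i)]

theorem IsPartition.exists_isCompact_subset [TopologicalSpace X] [OpensMeasurableSpace X]
    [T2Space X] {μ : Measure X} [IsFiniteMeasure μ] [μ.InnerRegularCompactLTTop]
    {ι : Type*} [Countable ι] {α : ι → Set X} (hα : IsPartition μ α) {η : ℝ≥0∞} (hη : η ≠ 0) :
    ∃ K : ι → Set X, (∀ i, K i ⊆ α i) ∧ (∀ i, IsCompact (K i)) ∧ μ (⋃ i, K i)ᶜ ≤ η := by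
  obtain ⟨η', hη'pos, hη'sum⟩ := ENNReal.exists_pos_sum_of_countable' hη ι
  choose K hKα hKc hKμ using fun i =>
    (hα.1 i).exists_isCompact_sdiff_lt (measure_ne_top μ _) (hη'pos i).ne'
  refine ⟨K, hKα, hKc, ?_⟩
  have hsub : (⋃ i, K i)ᶜ ⊆ (⋃ i, α i)ᶜ ∪ ⋃ i, α i \ K i := by
    intro x hx
    by_cases hxα : x ∈ ⋃ i, α i
    · obtain ⟨i, hi⟩ := Set.mem_iUnion.1 hxα
      exact Or.inr (Set.mem_iUnion.2 ⟨i, hi, fun hK => hx (Set.mem_iUnion.2 ⟨i, hK⟩)⟩)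
    · exact Or.inl hxα
  calc μ (⋃ i, K i)ᶜ ≤ μ (⋃ i, α i)ᶜ + ∑' i, μ (α i \ K i) :=
        (measure_mono hsub).trans <|
          (measure_union_le _ _).trans (by gcongr; exact measure_iUnion_le _)
    _ ≤ 0 + ∑' i, η' i := by rw [hα.2.2]; gcongr with i; exact (hKμ i).le
    _ ≤ η := by rw [zero_add]; exact hη'sum.le

theorem mul_measureReal_visitFreq_ge_le {G : Type*} [Group G] [MulAction G X]
    {μ : Measure X} [IsFiniteMeasure μ]
    (hmp : ∀ g : G, MeasurePreserving (fun x : X => g • x) μ μ) {U : Set X} (hU : MeasurableSet U)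
    (F : Finset G) (a : ℝ) : a * μ.real {x | a ≤ visitFreq F U x} ≤ μ.real U := by
  have hind : ∀ g : G, Integrable (fun x => U.indicator (1 : X → ℝ) (g • x)) μ := fun g =>
    (hmp g).integrable_comp_of_integrable ((integrable_const 1).indicator hU)
  have hint : ∀ g : G, ∫ x, U.indicator (1 : X → ℝ) (g • x) ∂μ = μ.real U := fun g => by
    rw [← integral_map (hmp g).aemeasurable (measurable_one.indicator hU).aestronglyMeasurable,
      (hmp g).map_eq, integral_indicator_one hU]
  calc a * μ.real {x | a ≤ visitFreq F U x} ≤ ∫ x, visitFreq F U x ∂μ :=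
        mul_meas_ge_le_integral_of_nonneg (ae_of_all _ fun x => div_nonneg
          (Finset.sum_nonneg fun g _ => Set.indicator_nonneg (fun _ _ => zero_le_one) _)
          F.card.cast_nonneg)
          ((integrable_finsetSum F fun g _ => hind g).div_const _) a
    _ = F.card * μ.real U / F.card := by
        simp only [visitFreq, integral_div, integral_finsetSum F fun g _ => hind g, hint,
          Finset.sum_const, nsmul_eq_mul]
    _ ≤ μ.real U := div_le_of_le_mul₀ F.card.cast_nonneg measureReal_nonneg (mul_comm _ _).le

section Covering

def IsAlmostCover (μ : Measure X) (d : X → X → ℝ) (ε : ℝ) (D : Finset X) : Prop :=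
  μ (⋃ x ∈ D, {y : X | d x y < ε}) > 1 - ENNReal.ofReal ε

def BoundedMeanComplexity {G : Type*} (μ : Measure X) (S : Set G)
    (d : Finset G → X → X → ℝ) : Prop :=
  ∀ ε > (0 : ℝ), ∃ C : ℕ, ∀ F : Finset G, ↑F ⊆ S →
    ∃ D : Finset X, D.card ≤ C ∧ IsAlmostCover μ (d F) ε D

variable {μ : Measure X}

theorem IsAlmostCover.mono {d₁ d₂ : X → X → ℝ} {ε₁ ε₂ : ℝ} {D : Finset X}
    (h : IsAlmostCover μ d₁ ε₁ D) (hε : ε₁ ≤ ε₂) (hd : ∀ x y, d₁ x y < ε₁ → d₂ x y < ε₂) :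
    IsAlmostCover μ d₂ ε₂ D :=
  calc 1 - ENNReal.ofReal ε₂ ≤ 1 - ENNReal.ofReal ε₁ :=
        tsub_le_tsub_left (ENNReal.ofReal_le_ofReal hε) 1
    _ < _ := h
    _ ≤ _ := measure_mono (Set.iUnion₂_mono fun x _ y hy => hd x y hy)

theorem IsAlmostCover.of_subset_union [IsFiniteMeasure μ] {d₁ d₂ : X → X → ℝ} {η ε : ℝ}
    {D₁ D₂ : Finset X} {B : Set X} (h : IsAlmostCover μ d₁ η D₁) (hη : 0 ≤ η)
    (hsub : (⋃ x ∈ D₁, {y | d₁ x y < η}) ⊆ (⋃ x ∈ D₂, {y | d₂ x y < ε}) ∪ B)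
    (hB : μ.real B + η ≤ ε) (hε : ε ≤ 1) : IsAlmostCover μ d₂ ε D₂ := by
  refine ENNReal.sub_lt_of_lt_add (ENNReal.ofReal_le_one.2 hε) ?_
  calc 1 < μ (⋃ x ∈ D₁, {y | d₁ x y < η}) + ENNReal.ofReal η :=
        ENNReal.lt_add_of_sub_lt_right (Or.inl ENNReal.one_ne_top) h
    _ ≤ μ (⋃ x ∈ D₂, {y | d₂ x y < ε}) + μ B + ENNReal.ofReal η := by
        gcongr
        exact (measure_mono hsub).trans (measure_union_le _ _)
    _ = μ (⋃ x ∈ D₂, {y | d₂ x y < ε}) + ENNReal.ofReal (μ.real B + η) := by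
        rw [ENNReal.ofReal_add measureReal_nonneg hη, ofReal_measureReal, add_assoc]
    _ ≤ μ (⋃ x ∈ D₂, {y | d₂ x y < ε}) + ENNReal.ofReal ε := by gcongr

/-- Each `d₁`-ball of radius `η` meeting the complement of `B` is recentred at a point outside `B`;
by the triangle inequality the new centre is `2η`-close to every point of the old ball. -/
theorem BoundedMeanComplexity.of_exceptional [IsFiniteMeasure μ] {G : Type*} {S : Set G}
    {d₁ d₂ : Finset G → X → X → ℝ} (h : BoundedMeanComplexity μ S d₁)
    (hd₁ : ∀ F x y z, d₁ F y z ≤ d₁ F x y + d₁ F x z)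
    (hex : ∀ ε > 0, ∃ η > 0, ∀ F : Finset G, ↑F ⊆ S → ∃ B : Set X, μ.real B + η ≤ ε ∧
      ∀ y z, y ∉ B → z ∉ B → d₁ F y z < 2 * η → d₂ F y z < ε) :
    BoundedMeanComplexity μ S d₂ := by
  classical
  intro ε hε
  obtain ⟨η, hη, hB⟩ := hex (min ε 1) (lt_min hε one_pos)
  obtain ⟨C, hC⟩ := h η hη
  refine ⟨C, fun F hF => ?_⟩
  obtain ⟨D, hDC, hD⟩ := hC F hF
  obtain ⟨B, hBη, hBd⟩ := hB F hF
  have hcentre : ∀ x, ∃ z, ({y | d₁ F x y < η} \ B).Nonempty → z ∈ {y | d₁ F x y < η} \ B := by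
    intro x
    by_cases hx : ({y | d₁ F x y < η} \ B).Nonempty
    exacts [⟨hx.some, fun _ => hx.some_mem⟩, ⟨x, fun h => absurd h hx⟩]
  choose c hc using hcentre
  refine ⟨D.image c, Finset.card_image_le.trans hDC, ?_⟩
  refine (hD.of_subset_union hη.le ?_ hBη (min_le_right _ _)).mono (min_le_left _ _)
    fun _ _ hlt => hlt.trans_le (min_le_left _ _)
  intro y hy
  by_cases hyB : y ∈ B
  · exact Or.inr hyB
  obtain ⟨x, hx, hxy⟩ := Set.mem_iUnion₂.1 hy
  obtain ⟨hcx, hcxB⟩ := hc x ⟨y, hxy, hyB⟩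
  refine Or.inl (Set.mem_iUnion₂.2 ⟨c x, Finset.mem_image_of_mem c hx, hBd _ _ hcxB hyB ?_⟩)
  linarith [hd₁ F x (c x) y, show d₁ F x (c x) < η from hcx, show d₁ F x y < η from hxy]

end Covering

theorem BoundedMeanComplexity.hamOrbit_of_dBar [MetricSpace X] [CompactSpace X] [BorelSpace X]
    {G : Type*} [Group G] [MulAction G X] {μ : Measure X} [IsFiniteMeasure μ]
    (hmp : ∀ g : G, MeasurePreserving (fun x : X => g • x) μ μ) {S : Set G}
    (h : BoundedMeanComplexity μ S dBar) {ι : Type*} [Finite ι] {α : ι → Set X}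
    (hα : IsPartition μ α) : BoundedMeanComplexity μ S (hamOrbit α) := by
  refine h.of_exceptional dBar_le_add fun ε hε => ?_
  obtain ⟨K, hKα, hKc, hKμ⟩ :=
    hα.exists_isCompact_subset (ENNReal.ofReal_pos.2 (show 0 < ε ^ 2 / 8 by positivity)).ne'
  obtain ⟨δ, hδ, hgap⟩ := exists_pos_le_dist_of_pairwise_disjoint hKc
    fun i j hij => (hα.2.1 hij).mono (hKα i) (hKα j)
  set U := (⋃ i, K i)ᶜ
  have hU : MeasurableSet U := (MeasurableSet.iUnion fun i => (hKc i).isClosed.measurableSet).compl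
  have hμU : μ.real U ≤ ε ^ 2 / 8 := ENNReal.toReal_le_of_le_ofReal (by positivity) hKμ
  refine ⟨min (ε / 2) (ε * δ / 4), by positivity, fun F _ => ⟨{x | ε / 4 ≤ visitFreq F U x}, ?_,
    fun y z hy hz hyz => ?_⟩⟩
  · have hB : ε / 4 * μ.real {x | ε / 4 ≤ visitFreq F U x} ≤ ε / 4 * (ε / 2) :=
      (mul_measureReal_visitFreq_ge_le hmp hU F (ε / 4)).trans (by linarith)
    linarith [le_of_mul_le_mul_left hB (by positivity), min_le_left (ε / 2) (ε * δ / 4)]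
  · have hyz' : dBar F y z / δ < ε / 2 := by
      rw [div_lt_iff₀ hδ]
      linarith [min_le_right (ε / 2) (ε * δ / 4)]
    calc hamOrbit α F y z ≤ dBar F y z / δ + visitFreq F U y + visitFreq F U z :=
          hamOrbit_le_dBar_div_add_visitFreq hKα hδ hgap F y z
      _ < ε / 2 + ε / 4 + ε / 4 := by
          gcongr
          exacts [not_le.1 hy, not_le.1 hz]
      _ = ε := by ring

theorem BoundedMeanComplexity.dBar_of_hamOrbit [MetricSpace X] [CompactSpace X]
    [OpensMeasurableSpace X] {G : Type*} [Group G] [MulAction G X] {μ : Measure X} {S : Set G}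
    (h : ∀ (r : ℕ) (α : Fin r → Set X), IsPartition μ α → BoundedMeanComplexity μ S (hamOrbit α)) :
    BoundedMeanComplexity μ S dBar := by
  intro ε hε
  obtain ⟨r, α, hα, hdiam⟩ := exists_partition_dist_le μ (half_pos hε)
  set M := Metric.diam (Set.univ : Set X)
  have hM : ∀ p q : X, dist p q ≤ M := fun p q =>
    Metric.dist_le_diam_of_mem isCompact_univ.isBounded trivial trivial
  have hM0 : 0 ≤ M := Metric.diam_nonneg
  obtain ⟨C, hC⟩ := h r α hα (ε / (2 * (M + 1))) (by positivity)
  refine ⟨C, fun F hF => ?_⟩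
  obtain ⟨D, hDC, hD⟩ := hC F hF
  refine ⟨D, hDC, hD.mono (div_le_self hε.le (by linarith)) fun x y hxy => ?_⟩
  have hsmall : M * (ε / (2 * (M + 1))) < ε / 2 := by
    rw [mul_div_assoc', div_lt_div_iff₀ (by positivity) two_pos]
    nlinarith
  calc dBar F x y ≤ M * hamOrbit α F x y + ε / 2 :=
        dBar_le_mul_hamOrbit_add hM (half_pos hε).le hdiam F x y
    _ ≤ M * (ε / (2 * (M + 1))) + ε / 2 := by gcongr
    _ < ε := by linarith

theorem boundedMeanComplexity_metric_iff_partitions_general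
    {X : Type*} [MetricSpace X] [CompactSpace X] [MeasurableSpace X] [BorelSpace X]
    {G : Type*} [Group G] [MulAction G X]
    (μ : Measure X) [IsProbabilityMeasure μ]
    (hmp : ∀ g : G, MeasurePreserving (fun x : X => g • x) μ μ)
    (S : Set G) :
    (∀ ε > (0 : ℝ), ∃ C : ℕ, ∀ F : Finset G, ↑F ⊆ S →
      ∃ D : Finset X, D.card ≤ C ∧
        μ (⋃ x ∈ D, {y : X | dBar F x y < ε}) > 1 - ENNReal.ofReal ε) ↔
    (∀ (r : ℕ) (α : Fin r → Set X), IsPartition μ α →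
      ∀ ε > (0 : ℝ), ∃ C : ℕ, ∀ F : Finset G, ↑F ⊆ S →
        ∃ D : Finset X, D.card ≤ C ∧
          μ (⋃ x ∈ D, {y : X | hamOrbit α F x y < ε}) > 1 - ENNReal.ofReal ε) :=
  ⟨fun h _ _ hα => BoundedMeanComplexity.hamOrbit_of_dBar hmp h hα,
    BoundedMeanComplexity.dBar_of_hamOrbit⟩

/-- For a topological dynamical system `(X,d,G)` with invariant Borel
probability measure `μ` and `S ⊆ G`: `μ` has bounded `(S,d)`-mean complexity iff every
finite measurable partition of `X` has bounded mean complexity along `S`. -/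
theorem boundedMeanComplexity_metric_iff_partitions
    {X : Type*} [MetricSpace X] [CompactSpace X] [MeasurableSpace X] [BorelSpace X]
    {G : Type*} [Group G] [MulAction G X]
    (hcont : ∀ g : G, Continuous (fun x : X => g • x))
    (μ : Measure X) [IsProbabilityMeasure μ]
    (hmp : ∀ g : G, MeasurePreserving (fun x : X => g • x) μ μ)
    (S : Set G) :
    (∀ ε > (0 : ℝ), ∃ C : ℕ, ∀ F : Finset G, ↑F ⊆ S →
      ∃ D : Finset X, D.card ≤ C ∧
        μ (⋃ x ∈ D, {y : X | dBar F x y < ε}) > 1 - ENNReal.ofReal ε) ↔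
    (∀ (r : ℕ) (α : Fin r → Set X), IsPartition μ α →
      ∀ ε > (0 : ℝ), ∃ C : ℕ, ∀ F : Finset G, ↑F ⊆ S →
        ∃ D : Finset X, D.card ≤ C ∧
          μ (⋃ x ∈ D, {y : X | hamOrbit α F x y < ε}) > 1 - ENNReal.ofReal ε) :=
  boundedMeanComplexity_metric_iff_partitions_general μ hmp S
end

section
/- Let (E_n) be a sequence of finite subsets of 𝔓_r arising as E_n = {g⁻¹α : g ∈ F_n} for a finite partition α and a Følner sequence (F_n) in an amenable group G acting measure-preservingly. If α is mean equicontinuous with respect to (F_n), then α has bounded mean complexity with respect to (F_n): for every ε>0 there exists k such that 𝒞(E_n, ε) ≤ k for all n. -/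
open MeasureTheory Filter Real Topology
open scoped symmDiff ENNReal

variable {X : Type*} [MeasurableSpace X]

/-!
For a fixed `n`, almost every point visits an atom of `α` at every `g ∈ F n`, and points with the
same itinerary along `F n` are at distance `0`, so finitely many balls cover a set of full measure.
For large `n`, pick a point `cᵢ` in each set `Bᵢ` given by mean equicontinuity: every `y ∈ Bᵢ` is
eventually `ε`-close to `cᵢ`, so by continuity of `μ` from below the `k` balls around the `cᵢ`
cover measure `> 1 - ε` for all `n ≥ N`. The finitely many `n < N` only raise the bound on `k`.
-/

section HammingOrbit

omit [MeasurableSpace X]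

variable {G ι : Type*} [Group G] [MulAction G X]

lemma hamOrbit_le_one (α : ι → Set X) (F : Finset G) (x y : X) : hamOrbit α F x y ≤ 1 := by
  classical
  exact div_le_one_of_le₀ (mod_cast Finset.card_filter_le _ _) (Nat.cast_nonneg _)

lemma hamOrbit_eq_zero {α : ι → Set X} {F : Finset G} {x y : X}
    (h : ∀ g ∈ F, ∃ i, g • x ∈ α i ∧ g • y ∈ α i) : hamOrbit α F x y = 0 := by
  classical
  rw [hamOrbit, Finset.filter_false_of_mem fun g hg ↦ not_forall_not.2 (h g hg)]
  simp

/-- One representative for each possible itinerary suffices, since points sharing an itinerary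
are at `hamOrbit`-distance `0`. -/
lemma exists_finset_forall_exists_hamOrbit_eq_zero [Finite ι] (α : ι → Set X) (F : Finset G) :
    ∃ D : Finset X, ∀ y, (∀ g ∈ F, ∃ i, g • y ∈ α i) → ∃ x ∈ D, hamOrbit α F x y = 0 := by
  let itinerary : X → F → Set ι := fun y g ↦ {i | (g : G) • y ∈ α i}
  obtain ⟨s, -, hs⟩ := Set.exists_subset_bijOn Set.univ itinerary
  have hsfin : s.Finite := .of_finite_image (hs.image_eq ▸ Set.toFinite _) hs.injOn
  refine ⟨hsfin.toFinset, fun y hy ↦ ?_⟩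
  obtain ⟨x, hxs, hxy⟩ := hs.surjOn (Set.mem_image_of_mem itinerary (Set.mem_univ y))
  refine ⟨x, hsfin.mem_toFinset.2 hxs, hamOrbit_eq_zero fun g hg ↦ ?_⟩
  obtain ⟨i, hi⟩ := hy g hg
  have hix : i ∈ itinerary x ⟨g, hg⟩ := by rw [hxy]; exact hi
  exact ⟨i, hix, hi⟩

end HammingOrbit

section Measure

variable {μ : Measure X}

lemma ae_forall_smul_mem {G ι : Type*} [Group G] [MulAction G X]
    (hqmp : ∀ g : G, Measure.QuasiMeasurePreserving (g • ·) μ μ)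
    {α : ι → Set X} (hα : ∀ᵐ x ∂μ, ∃ i, x ∈ α i) (F : Finset G) :
    ∀ᵐ y ∂μ, ∀ g ∈ F, ∃ i, g • y ∈ α i :=
  (Filter.eventually_all_finset F).2 fun g _ ↦ (hqmp g).ae hα

lemma eventually_lt_measure_of_forall_eventually_mem {ι : Type*} [Preorder ι] [IsDirectedOrder ι]
    [Nonempty ι] [(atTop : Filter ι).IsCountablyGenerated] {A : Set X} {Y : ι → Set X}
    {c : ℝ≥0∞} (hY : ∀ y ∈ A, ∀ᶠ n in atTop, y ∈ Y n) (hc : c < μ A) :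
    ∀ᶠ n in atTop, c < μ (Y n) := by
  let Z : ι → Set X := fun N ↦ ⋂ n ≥ N, Y n
  have hZ : Monotone Z := fun N M hNM ↦ Set.biInter_mono (fun n hn ↦ hNM.trans hn) fun _ _ ↦ le_rfl
  have hAZ : A ⊆ ⋃ N, Z N := fun y hy ↦ by
    obtain ⟨N, hN⟩ := eventually_atTop.1 (hY y hy)
    exact Set.mem_iUnion.2 ⟨N, Set.mem_iInter₂.2 hN⟩
  obtain ⟨N, hN⟩ := lt_iSup_iff.1 (hZ.measure_iUnion (μ := μ) ▸ hc.trans_le (measure_mono hAZ))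
  exact eventually_atTop.2 ⟨N, fun n hn ↦ hN.trans_le (measure_mono (Set.biInter_subset_of_mem hn))⟩

lemma measure_eq_one_of_ae_mem [IsProbabilityMeasure μ] {S : Set X} (h : ∀ᵐ y ∂μ, y ∈ S) :
    μ S = 1 :=
  (measure_congr (ae_eq_univ.2 (ae_iff.1 h))).trans measure_univ

lemma exists_finset_measure_hamOrbit_lt_eq_one [IsProbabilityMeasure μ] {G ι : Type*} [Group G]
    [MulAction G X] [Finite ι] (hqmp : ∀ g : G, Measure.QuasiMeasurePreserving (g • ·) μ μ)
    {α : ι → Set X} (hα : ∀ᵐ x ∂μ, ∃ i, x ∈ α i) (F : Finset G) {ε : ℝ} (hε : 0 < ε) :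
    ∃ D : Finset X, μ (⋃ x ∈ D, {y | hamOrbit α F x y < ε}) = 1 := by
  obtain ⟨D, hD⟩ := exists_finset_forall_exists_hamOrbit_eq_zero α F
  refine ⟨D, measure_eq_one_of_ae_mem <| (ae_forall_smul_mem hqmp hα F).mono fun y hy ↦ ?_⟩
  obtain ⟨x, hx, h0⟩ := hD y hy
  exact Set.mem_biUnion hx (show _ < ε from h0 ▸ hε)

lemma exists_finset_card_le_eventually_lt_measure_hamOrbit_lt {G ι : Type*} [Group G]
    [MulAction G X] {α : ι → Set X} {F : ℕ → Finset G} {k : ℕ} {B : Fin k → Set X} {ε : ℝ}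
    (hB : ∀ (i : Fin k) (x y : X), x ∈ B i → y ∈ B i →
      limsup (fun n ↦ hamOrbit α (F n) x y) atTop < ε)
    {c : ℝ≥0∞} (hc : c < μ (⋃ i, B i)) :
    ∃ D : Finset X, D.card ≤ k ∧
      ∀ᶠ n in atTop, c < μ (⋃ x ∈ D, {y | hamOrbit α (F n) x y < ε}) := by
  classical
  have : Nonempty X := (nonempty_of_measure_ne_zero (ne_bot_of_gt hc)).to_subtype.map (↑)
  let center : Fin k → X := fun i ↦ Classical.epsilon (· ∈ B i)
  refine ⟨Finset.univ.image center, Finset.card_image_le.trans_eq (Finset.card_fin k),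
    eventually_lt_measure_of_forall_eventually_mem (fun y hy ↦ ?_) hc⟩
  obtain ⟨i, hi⟩ := Set.mem_iUnion.1 hy
  have hci : center i ∈ B i := Classical.epsilon_spec ⟨y, hi⟩
  refine (eventually_lt_of_limsup_lt (hB i _ _ hci hi)
    (isBoundedUnder_of ⟨1, fun n ↦ hamOrbit_le_one α (F n) (center i) y⟩)).mono fun n hn ↦ ?_
  exact Set.mem_biUnion (Finset.mem_image_of_mem center (Finset.mem_univ i)) hn

end Measure

theorem boundedMeanComplexity_of_meanEquicontinuous_general (μ : Measure X) [IsProbabilityMeasure μ]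
    {G : Type*} [Group G] [MulAction G X]
    (hmp : ∀ g : G, MeasurePreserving (fun x => g • x) μ μ)
    {r : ℕ} (α : Fin r → Set X) (hα : IsPartition μ α)
    (F : ℕ → Finset G)
    (hme : ∀ ε > (0 : ℝ), ∃ (k : ℕ) (B : Fin k → Set X),
      (∀ i, MeasurableSet (B i)) ∧ Pairwise (Function.onFun Disjoint B) ∧
      μ (⋃ i, B i) > 1 - ENNReal.ofReal ε ∧
      ∀ (i : Fin k) (x y : X), x ∈ B i → y ∈ B i →
        limsup (fun n => hamOrbit α (F n) x y) atTop < ε) :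
    ∀ ε > (0 : ℝ), ∃ k : ℕ, ∀ n : ℕ,
      ∃ D : Finset X, D.card ≤ k ∧
        μ (⋃ x ∈ D, {y : X | hamOrbit α (F n) x y < ε}) > 1 - ENNReal.ofReal ε := by
  intro ε hε
  have hα_ae : ∀ᵐ x ∂μ, ∃ i, x ∈ α i :=
    (measure_eq_zero_iff_ae_notMem.1 hα.2.2).mono fun x hx ↦ by simpa using hx
  choose D hD using fun n ↦ exists_finset_measure_hamOrbit_lt_eq_one
    (fun g ↦ (hmp g).quasiMeasurePreserving) hα_ae (F n) hε
  obtain ⟨k, B, -, -, hBμ, hB⟩ := hme ε hε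
  obtain ⟨C, hCk, hC⟩ := exists_finset_card_le_eventually_lt_measure_hamOrbit_lt hB hBμ
  obtain ⟨N, hN⟩ := eventually_atTop.1 hC
  refine ⟨max k ((Finset.range N).sup fun n ↦ (D n).card), fun n ↦ ?_⟩
  rcases lt_or_ge n N with hn | hn
  · refine ⟨D n, le_max_of_le_right (Finset.le_sup (f := fun n ↦ (D n).card)
      (Finset.mem_range.2 hn)), ?_⟩
    rw [hD n]
    exact ENNReal.sub_lt_self ENNReal.one_ne_top one_ne_zero (ENNReal.ofReal_pos.2 hε).ne'
  · exact ⟨C, hCk.trans (le_max_left _ _), hN n hn⟩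

/-- For a measure-preserving action of a countably infinite discrete
amenable group `G` with Følner sequence `(F_n)`, if the finite partition `α` is mean
equicontinuous with respect to `(F_n)`, then `α` has bounded mean complexity with respect
to `(F_n)`. -/
theorem boundedMeanComplexity_of_meanEquicontinuous (μ : Measure X) [IsProbabilityMeasure μ]
    {G : Type*} [Group G] [Countable G] [Infinite G] [DecidableEq G] [MulAction G X]
    (hmp : ∀ g : G, MeasurePreserving (fun x => g • x) μ μ)
    {r : ℕ} (hr : 2 ≤ r) (α : Fin r → Set X) (hα : IsPartition μ α)
    (F : ℕ → Finset G) (hFne : ∀ n, (F n).Nonempty)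
    (hFol : ∀ g : G, Tendsto
      (fun n => ((((F n).image (fun h => g * h)) ∆ (F n)).card : ℝ) / (F n).card)
      atTop (𝓝 0))
    (hme : ∀ ε > (0 : ℝ), ∃ (k : ℕ) (B : Fin k → Set X),
      (∀ i, MeasurableSet (B i)) ∧ Pairwise (Function.onFun Disjoint B) ∧
      μ (⋃ i, B i) > 1 - ENNReal.ofReal ε ∧
      ∀ (i : Fin k) (x y : X), x ∈ B i → y ∈ B i →
        limsup (fun n => hamOrbit α (F n) x y) atTop < ε) :
    ∀ ε > (0 : ℝ), ∃ k : ℕ, ∀ n : ℕ,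
      ∃ D : Finset X, D.card ≤ k ∧
        μ (⋃ x ∈ D, {y : X | hamOrbit α (F n) x y < ε}) > 1 - ENNReal.ofReal ε :=
  boundedMeanComplexity_of_meanEquicontinuous_general μ hmp α hα F hme
end
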